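/- arXiv:1602.08549 — 6 statements merged into one kernel-verified Lean document; each statement's English description precedes it below -/
import Mathlib

section
/- Let n ≤ m, 1 ≤ k < n, ℓ ≥ 0, and let t = ⌊(n−k)/2⌋. Let G be the canonical generator matrix of a Gabidulin code Gab_k(g) with g ∈ F_{q^m}^n, ‖g‖ = n. Let S ∈ GL_k(F_{q^m}), X₁ a k×ℓ matrix over F_{q^m}, X₂ a k×n matrix over F_{q^m} with ‖X₂‖ = t₂ where 1 ≤ t₂ < t, and P ∈ GL_{n+ℓ}(F_q). Set G_pub = S·(X₁ | G + X₂)·P. Then there exist P* ∈ GL_{n+ℓ}(F_q), a k×(ℓ+t₂) matrix X* over F_{q^m}, and g* ∈ F_{q^m}^{n−t₂} with ‖g*‖ = n−t₂, such that G_pub = S·(X* | G*)·P*, where G* is the canonical generator matrix of the Gabidulin code Gab_k(g*). Moreover, the error-correction capability t* = ⌊(n−t₂−k)/2⌋ of Gab_k(g*) satisfies t* ≥ t − t₂, with strict inequality t* > t − t₂ whenever t₂ ≥ 2 or n−k is odd. -/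
open Matrix

/-- The rank weight of a vector `x` over the base field `K`: the dimension over `K`
of the `K`-span of the coordinates of `x`. -/
noncomputable def rankWeight (K : Type*) {F : Type*} [Field K] [Field F] [Algebra K F]
    {n : ℕ} (x : Fin n → F) : ℕ :=
  Module.finrank K (Submodule.span K (Set.range x))

/-- The column rank over `K` of a matrix `M` over `F`: the dimension over `K`
of the `K`-span of the columns of `M`. -/
noncomputable def colRank (K : Type*) {F : Type*} [Field K] [Field F] [Algebra K F]
    {k n : ℕ} (M : Matrix (Fin k) (Fin n) F) : ℕ :=
  Module.finrank K (Submodule.span K (Set.range Mᵀ))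

/-- Horizontal concatenation `(A | B)` of two matrices with the same number of rows. -/
def happend {F : Type*} {k a b : ℕ} (A : Matrix (Fin k) (Fin a) F)
    (B : Matrix (Fin k) (Fin b) F) : Matrix (Fin k) (Fin (a + b)) F :=
  Matrix.of fun i => Fin.append (A i) (B i)

/-- The block matrix `[[A, B], [C, D]]`. -/
def blocks {F : Type*} {a b c d : ℕ} (A : Matrix (Fin a) (Fin c) F)
    (B : Matrix (Fin a) (Fin d) F) (C : Matrix (Fin b) (Fin c) F)
    (D : Matrix (Fin b) (Fin d) F) : Matrix (Fin (a + b)) (Fin (c + d)) F :=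
  Matrix.of (Fin.append (fun i => Fin.append (A i) (B i)) (fun i => Fin.append (C i) (D i)))

/-- Canonical generator matrix of the Gabidulin code `Gab_k(g)`: its `(i+1)`-st row
is `g^{[i]} = (g_1^{q^i}, …, g_n^{q^i})`. -/
def gabGen {F : Type*} [Field F] (q k : ℕ) {n : ℕ} (g : Fin n → F) :
    Matrix (Fin k) (Fin n) F :=
  Matrix.of fun i j => g j ^ q ^ (i : ℕ)

/-- The Gabidulin code `Gab_k(g)`: the `F`-row span of its canonical generator matrix. -/
noncomputable def gabCode {F : Type*} [Field F] (q k : ℕ) {n : ℕ} (g : Fin n → F) :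
    Submodule F (Fin n → F) :=
  Submodule.span F (Set.range (gabGen q k g))

/-- The matrix `Λ_i(M)` obtained by stacking `M^{[0]}, M^{[1]}, …, M^{[i]}`. -/
def lam {F : Type*} [Field F] (q i : ℕ) {k n : ℕ} (M : Matrix (Fin k) (Fin n) F) :
    Matrix (Fin ((i + 1) * k)) (Fin n) F :=
  Matrix.of fun r c =>
    have hk : 0 < k := by
      rcases Nat.eq_zero_or_pos k with h | h
      · exact absurd r.isLt (by simp [h])
      · exact h
    M ⟨(r : ℕ) % k, Nat.mod_lt _ hk⟩ c ^ q ^ ((r : ℕ) / k)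

/-- The dual of a linear code `C ⊆ F^N`. -/
def dualCode {F : Type*} [Field F] {N : ℕ} (C : Submodule F (Fin N → F)) :
    Submodule F (Fin N → F) where
  carrier := {z | ∀ c ∈ C, dotProduct c z = 0}
  add_mem' := by
    intro a b ha hb c hc
    simp [dotProduct_add, ha c hc, hb c hc]
  zero_mem' := by
    intro c hc
    simp
  smul_mem' := by
    intro r a ha c hc
    simp [dotProduct_smul, ha c hc]


section Helpers

variable {R : Type*} [CommRing R]

lemma happend_mul_blocks {k a b c d : ℕ}
    (A : Matrix (Fin k) (Fin a) R) (B : Matrix (Fin k) (Fin b) R)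
    (M₁₁ : Matrix (Fin a) (Fin c) R) (M₁₂ : Matrix (Fin a) (Fin d) R)
    (M₂₁ : Matrix (Fin b) (Fin c) R) (M₂₂ : Matrix (Fin b) (Fin d) R) :
    happend A B * blocks M₁₁ M₁₂ M₂₁ M₂₂ =
      happend (A * M₁₁ + B * M₂₁) (A * M₁₂ + B * M₂₂) := by
  ext i j
  induction j using Fin.addCases with
  | left j =>
      simp [happend, blocks, Matrix.mul_apply, Fin.sum_univ_add, Matrix.add_apply,
        Fin.append_left, Fin.append_right]
  | right j =>
      simp [happend, blocks, Matrix.mul_apply, Fin.sum_univ_add, Matrix.add_apply,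
        Fin.append_left, Fin.append_right]

lemma blocks_mul_blocks {a b c d e f : ℕ}
    (M₁₁ : Matrix (Fin a) (Fin c) R) (M₁₂ : Matrix (Fin a) (Fin d) R)
    (M₂₁ : Matrix (Fin b) (Fin c) R) (M₂₂ : Matrix (Fin b) (Fin d) R)
    (N₁₁ : Matrix (Fin c) (Fin e) R) (N₁₂ : Matrix (Fin c) (Fin f) R)
    (N₂₁ : Matrix (Fin d) (Fin e) R) (N₂₂ : Matrix (Fin d) (Fin f) R) :
    blocks M₁₁ M₁₂ M₂₁ M₂₂ * blocks N₁₁ N₁₂ N₂₁ N₂₂ =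
      blocks (M₁₁ * N₁₁ + M₁₂ * N₂₁) (M₁₁ * N₁₂ + M₁₂ * N₂₂)
        (M₂₁ * N₁₁ + M₂₂ * N₂₁) (M₂₁ * N₁₂ + M₂₂ * N₂₂) := by
  ext i j
  induction i using Fin.addCases with
  | left i =>
      induction j using Fin.addCases with
      | left j => simp [blocks, Matrix.mul_apply, Fin.sum_univ_add, Matrix.add_apply,
          Fin.append_left, Fin.append_right]
      | right j => simp [blocks, Matrix.mul_apply, Fin.sum_univ_add, Matrix.add_apply,
          Fin.append_left, Fin.append_right]
  | right i =>
      induction j using Fin.addCases with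
      | left j => simp [blocks, Matrix.mul_apply, Fin.sum_univ_add, Matrix.add_apply,
          Fin.append_left, Fin.append_right]
      | right j => simp [blocks, Matrix.mul_apply, Fin.sum_univ_add, Matrix.add_apply,
          Fin.append_left, Fin.append_right]

lemma blocks_one {a b : ℕ} :
    blocks (1 : Matrix (Fin a) (Fin a) R) 0 0 (1 : Matrix (Fin b) (Fin b) R) = 1 := by
  ext i j
  induction i using Fin.addCases with
  | left i =>
      induction j using Fin.addCases with
      | left j =>
          simp [blocks, Fin.append_left, Fin.append_right, Matrix.one_apply, Fin.ext_iff]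
      | right j =>
          simp only [blocks, Matrix.of_apply, Fin.append_left, Fin.append_right,
            Matrix.zero_apply]
          rw [Matrix.one_apply_ne (by simp [Fin.ext_iff]; omega)]
  | right i =>
      induction j using Fin.addCases with
      | left j =>
          simp only [blocks, Matrix.of_apply, Fin.append_left, Fin.append_right,
            Matrix.zero_apply]
          rw [Matrix.one_apply_ne (by simp [Fin.ext_iff]; omega)]
      | right j =>
          simp [blocks, Fin.append_left, Fin.append_right, Matrix.one_apply, Fin.ext_iff]

lemma blocks_map {S : Type*} {a b c d : ℕ} (f : R → S)
    (A : Matrix (Fin a) (Fin c) R) (B : Matrix (Fin a) (Fin d) R)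
    (C : Matrix (Fin b) (Fin c) R) (D : Matrix (Fin b) (Fin d) R) :
    (blocks A B C D).map f = blocks (A.map f) (B.map f) (C.map f) (D.map f) := by
  ext i j
  induction i using Fin.addCases with
  | left i =>
      induction j using Fin.addCases with
      | left j => simp [blocks, Fin.append_left, Fin.append_right]
      | right j => simp [blocks, Fin.append_left, Fin.append_right]
  | right i =>
      induction j using Fin.addCases with
      | left j => simp [blocks, Fin.append_left, Fin.append_right]
      | right j => simp [blocks, Fin.append_left, Fin.append_right]

end Helpers

/-- for the public key `G_pub = S·(X₁ | G + X₂)·P` of the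
Gabidulin–Ourivski variant, with `‖X₂‖ = t₂`, `1 ≤ t₂ < t = ⌊(n-k)/2⌋` and
`P ∈ GL_{n+ℓ}(F_q)`, there exist `P* ∈ GL_{n+ℓ}(F_q)`, a `k×(ℓ+t₂)` matrix `X*` and
`g* ∈ F_{q^m}^{n-t₂}` with `‖g*‖ = n - t₂` such that `G_pub = S·(X* | G*)·P*`, where
`G*` is the canonical generator matrix of `Gab_k(g*)`; moreover
`t* = ⌊(n-t₂-k)/2⌋ ≥ t - t₂`, with strict inequality whenever `t₂ ≥ 2` or `n-k` is odd. -/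
theorem statement6 (K F : Type*) [Field K] [Field F] [Algebra K F] [Fintype K] [Fintype F]
    (m n k l t₂ : ℕ) (hm : Fintype.card F = Fintype.card K ^ m) (hnm : n ≤ m)
    (hk1 : 1 ≤ k) (hkn : k < n)
    (g : Fin n → F) (hg : rankWeight K g = n)
    (S : Matrix (Fin k) (Fin k) F) (hS : IsUnit S)
    (X₁ : Matrix (Fin k) (Fin l) F) (X₂ : Matrix (Fin k) (Fin n) F)
    (ht₂ : colRank K X₂ = t₂) (ht₂1 : 1 ≤ t₂) (ht₂t : t₂ < (n - k) / 2)
    (P : Matrix (Fin (l + n)) (Fin (l + n)) K) (hP : IsUnit P)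
    (Gpub : Matrix (Fin k) (Fin (l + n)) F)
    (hGpub : Gpub =
      S * happend X₁ (gabGen (Fintype.card K) k g + X₂) * P.map (algebraMap K F)) :
    ∃ (Pstar : Matrix (Fin (l + n)) (Fin (l + n)) K)
      (Xstar : Matrix (Fin k) (Fin (l + t₂)) F) (gstar : Fin (n - t₂) → F),
      IsUnit Pstar ∧ rankWeight K gstar = n - t₂ ∧
      Gpub = S * (happend Xstar (gabGen (Fintype.card K) k gstar)).submatrix id
          (Fin.cast (by omega)) * Pstar.map (algebraMap K F) ∧
      (n - k) / 2 - t₂ ≤ (n - t₂ - k) / 2 ∧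
      ((2 ≤ t₂ ∨ Odd (n - k)) → (n - k) / 2 - t₂ < (n - t₂ - k) / 2) := by
  classical
  set q := Fintype.card K with hq
  have hn' : t₂ + (n - t₂) = n := by omega
  have hcast : l + n = l + t₂ + (n - t₂) := by omega
  -- characteristic setup
  obtain ⟨s, hp, hcard⟩ := FiniteField.card K (ringChar K)
  set p := ringChar K with hpdef
  haveI hfp : Fact (Nat.Prime p) := ⟨hp⟩
  haveI : CharP F p := charP_of_injective_algebraMap (algebraMap K F).injective p
  haveI : ExpChar F p := ExpChar.prime hp
  have hfrobsum : ∀ (i : ℕ) (v : Fin n → F) (c : Fin n → K),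
      (∑ r, v r * algebraMap K F (c r)) ^ q ^ i
        = ∑ r, (v r) ^ q ^ i * algebraMap K F (c r) := by
    intro i v c
    have h1 : ∀ x : F, (iterateFrobenius F p ((s : ℕ) * i)) x = x ^ q ^ i := by
      intro x
      rw [iterateFrobenius_def, hq, hcard, ← pow_mul]
    calc (∑ r, v r * algebraMap K F (c r)) ^ q ^ i
        = iterateFrobenius F p ((s : ℕ) * i) (∑ r, v r * algebraMap K F (c r)) :=
          (h1 _).symm
      _ = ∑ r, iterateFrobenius F p ((s : ℕ) * i) (v r * algebraMap K F (c r)) :=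
          map_sum _ _ _
      _ = ∑ r, (v r) ^ q ^ i * algebraMap K F (c r) := by
          refine Finset.sum_congr rfl fun r _ => ?_
          rw [_root_.map_mul, h1, h1, ← map_pow, hq, FiniteField.pow_card_pow]
  -- the linear map whose columns are the columns of X₂
  let L : (Fin n → K) →ₗ[K] (Fin k → F) :=
    { toFun := fun v i => ∑ j, X₂ i j * algebraMap K F (v j)
      map_add' := by
        intro u v; funext i
        simp [map_add, mul_add, Finset.sum_add_distrib]
      map_smul' := by
        intro c v; funext i
        simp [Algebra.smul_def, Finset.mul_sum, mul_left_comm] }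
  have hrange : LinearMap.range L = Submodule.span K (Set.range X₂ᵀ) := by
    apply le_antisymm
    · rintro _ ⟨v, rfl⟩
      have hv : L v = ∑ j, v j • X₂ᵀ j := by
        funext i
        simp [L, Finset.sum_apply, Algebra.smul_def, Matrix.transpose_apply, mul_comm]
      rw [hv]
      exact Submodule.sum_mem _ fun j _ =>
        Submodule.smul_mem _ _ (Submodule.subset_span ⟨j, rfl⟩)
    · rw [Submodule.span_le]
      rintro _ ⟨j, rfl⟩
      refine ⟨Pi.single j 1, ?_⟩
      funext i
      simp [L, Pi.single_apply, apply_ite (algebraMap K F), mul_ite]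
  have hrankL : Module.finrank K (LinearMap.range L) = t₂ := by
    rw [hrange]; exact ht₂
  have hker : Module.finrank K (LinearMap.ker L) = n - t₂ := by
    have h := LinearMap.finrank_range_add_finrank_ker L
    rw [hrankL, Module.finrank_fin_fun] at h
    omega
  -- a basis of K^n whose last n - t₂ vectors lie in ker L
  obtain ⟨W', hW'⟩ := Submodule.exists_isCompl (LinearMap.ker L)
  have hW'rank : Module.finrank K W' = t₂ := by
    have h := Submodule.finrank_add_eq_of_isCompl hW'
    rw [hker, Module.finrank_fin_fun] at h
    omega
  let bW := Module.finBasisOfFinrankEq K (LinearMap.ker L) hker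
  let bW' := Module.finBasisOfFinrankEq K W' hW'rank
  let e := Submodule.prodEquivOfIsCompl _ _ hW'.symm
  let b0 : Module.Basis (Fin t₂ ⊕ Fin (n - t₂)) K (Fin n → K) := (bW'.prod bW).map e
  let b : Module.Basis (Fin n) K (Fin n → K) := b0.reindex (finSumFinEquiv.trans (finCongr hn'))
  have hbker : ∀ j : Fin (n - t₂),
      b (Fin.cast hn' (Fin.natAdd t₂ j)) ∈ LinearMap.ker L := by
    intro j
    have hb : b (Fin.cast hn' (Fin.natAdd t₂ j)) = b0 (Sum.inr j) := by
      rw [Module.Basis.reindex_apply]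
      congr 1
      rw [Equiv.symm_apply_eq, Equiv.trans_apply, finSumFinEquiv_apply_right, finCongr_apply]
    rw [hb]
    have : b0 (Sum.inr j) = ((bW j : Fin n → K)) := by
      simp only [b0, Module.Basis.map_apply, Module.Basis.prod_apply, Sum.elim_inr, Function.comp_apply]
      simp [e, Submodule.coe_prodEquivOfIsCompl]
    rw [this]
    exact (bW j).2
  -- the change-of-basis matrix T
  let T : Matrix (Fin n) (Fin n) K := (Pi.basisFun K (Fin n)).toMatrix ⇑b
  have hT : ∀ r j, T r j = b j r := fun r j => by
    simp [T, Module.Basis.toMatrix_apply, Pi.basisFun_repr]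
  haveI : Invertible T := (Pi.basisFun K (Fin n)).invertibleToMatrix b
  let TF := T.map (algebraMap K F)
  let g' : Fin n → F := fun j => ∑ r, g r * algebraMap K F (T r j)
  have hGT : gabGen q k g * TF = gabGen q k g' := by
    ext i j
    show ∑ r, gabGen q k g i r * TF r j = (g' j) ^ q ^ (i : ℕ)
    simp only [gabGen, Matrix.of_apply, Matrix.map_apply, TF, g']
    rw [hfrobsum i g (fun r => T r j)]
  have hX₂T : ∀ i (j : Fin (n - t₂)),
      (X₂ * TF) i (Fin.cast hn' (Fin.natAdd t₂ j)) = 0 := by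
    intro i j
    have hmem := hbker j
    rw [LinearMap.mem_ker] at hmem
    have : (X₂ * TF) i (Fin.cast hn' (Fin.natAdd t₂ j))
        = L (b (Fin.cast hn' (Fin.natAdd t₂ j))) i := by
      simp only [Matrix.mul_apply, TF, Matrix.map_apply, L, LinearMap.coe_mk, AddHom.coe_mk]
      refine Finset.sum_congr rfl fun r _ => ?_
      rw [hT]
    rw [this, hmem]
    rfl
  -- rank weight of g'
  have hspan : Submodule.span K (Set.range g') = Submodule.span K (Set.range g) := by
    apply le_antisymm
    · rw [Submodule.span_le]
      rintro _ ⟨j, rfl⟩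
      have hj : g' j = ∑ r, T r j • g r := by
        simp [g', Algebra.smul_def, mul_comm]
      rw [hj]
      exact Submodule.sum_mem _ fun r _ =>
        Submodule.smul_mem _ _ (Submodule.subset_span ⟨r, rfl⟩)
    · rw [Submodule.span_le]
      rintro _ ⟨r, rfl⟩
      have key : ∑ j, (⅟T) j r • g' j = g r := by
        have h1 : ∀ j, (⅟T) j r • g' j
            = ∑ s, g s * algebraMap K F (T s j * (⅟T) j r) := by
          intro j
          rw [Algebra.smul_def]
          show (algebraMap K F) ((⅟T) j r) * (∑ ss, g ss * algebraMap K F (T ss j)) = _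
          rw [Finset.mul_sum]
          refine Finset.sum_congr rfl fun ss _ => ?_
          rw [_root_.map_mul]
          ring
        rw [Finset.sum_congr rfl fun j _ => h1 j, Finset.sum_comm]
        have h2 : ∀ ss, (∑ j, g ss * algebraMap K F (T ss j * (⅟T) j r))
            = g ss * algebraMap K F ((T * ⅟T) ss r) := by
          intro ss
          rw [← Finset.mul_sum, ← map_sum, Matrix.mul_apply]
        rw [Finset.sum_congr rfl fun ss _ => h2 ss, mul_invOf_self]
        simp [Matrix.one_apply, apply_ite (algebraMap K F), mul_ite]
      rw [← key]
      exact Submodule.sum_mem _ fun j _ =>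
        Submodule.smul_mem _ _ (Submodule.subset_span ⟨j, rfl⟩)
  have hg' : Module.finrank K (Submodule.span K (Set.range g')) = n := by
    rw [hspan]; exact hg
  have hli : LinearIndependent K g' := by
    rw [linearIndependent_iff_card_eq_finrank_span]
    simp [Set.finrank, hg']
  let gstar : Fin (n - t₂) → F := fun j => g' (Fin.cast hn' (Fin.natAdd t₂ j))
  have hinj : Function.Injective (fun j : Fin (n - t₂) => Fin.cast hn' (Fin.natAdd t₂ j)) := by
    intro a b hab
    have h := congrArg Fin.val hab
    simp only [Fin.coe_cast, Fin.coe_natAdd] at h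
    exact Fin.ext (by omega)
  have hgstar : rankWeight K gstar = n - t₂ := by
    have hlis : LinearIndependent K gstar := hli.comp _ hinj
    rw [rankWeight, finrank_span_eq_card hlis, Fintype.card_fin]
  -- the matrices
  let GX := (gabGen q k g + X₂) * TF
  let Xstar : Matrix (Fin k) (Fin (l + t₂)) F :=
    Matrix.of fun i => Fin.append (X₁ i)
      (fun j : Fin t₂ => GX i (Fin.cast hn' (Fin.castAdd (n - t₂) j)))
  have hGstar : ∀ i (j : Fin (n - t₂)),
      gabGen q k gstar i j = GX i (Fin.cast hn' (Fin.natAdd t₂ j)) := by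
    intro i j
    have h1 : GX i (Fin.cast hn' (Fin.natAdd t₂ j))
        = (gabGen q k g * TF) i (Fin.cast hn' (Fin.natAdd t₂ j))
          + (X₂ * TF) i (Fin.cast hn' (Fin.natAdd t₂ j)) := by
      simp [GX, Matrix.add_mul]
    rw [h1, hX₂T, add_zero, hGT]
    rfl
  let Q : Matrix (Fin (l + n)) (Fin (l + n)) K := blocks 1 0 0 T
  let Qi : Matrix (Fin (l + n)) (Fin (l + n)) K := blocks 1 0 0 (⅟T)
  have hQQi : Q * Qi = 1 := by
    show blocks (1 : Matrix (Fin l) (Fin l) K) 0 0 T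
        * blocks (1 : Matrix (Fin l) (Fin l) K) 0 0 (⅟T) = 1
    rw [blocks_mul_blocks]
    simp only [Matrix.one_mul, Matrix.mul_one, Matrix.mul_zero, Matrix.zero_mul,
      add_zero, zero_add, mul_invOf_self]
    exact blocks_one
  have hQiQ : Qi * Q = 1 := by
    show blocks (1 : Matrix (Fin l) (Fin l) K) 0 0 (⅟T)
        * blocks (1 : Matrix (Fin l) (Fin l) K) 0 0 T = 1
    rw [blocks_mul_blocks]
    simp only [Matrix.one_mul, Matrix.mul_one, Matrix.mul_zero, Matrix.zero_mul,
      add_zero, zero_add, invOf_mul_self]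
    exact blocks_one
  haveI : Invertible Qi := ⟨Q, hQQi, hQiQ⟩
  have hQF : Q.map (algebraMap K F) = blocks 1 0 0 TF := by
    show (blocks (1 : Matrix (Fin l) (Fin l) K) 0 0 T).map (algebraMap K F) = _
    rw [blocks_map]
    rw [Matrix.map_one _ (map_zero _) (map_one _), Matrix.map_zero _ (map_zero _),
      Matrix.map_zero _ (map_zero _)]
  have hmain : happend X₁ (gabGen q k g + X₂) * Q.map (algebraMap K F)
      = (happend Xstar (gabGen q k gstar)).submatrix id (Fin.cast hcast) := by
    rw [hQF, happend_mul_blocks]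
    simp only [Matrix.mul_one, Matrix.mul_zero, add_zero, zero_add]
    ext i c
    rw [Matrix.submatrix_apply, id_eq]
    induction c using Fin.addCases with
    | left c₁ =>
        have hidx : Fin.cast hcast (Fin.castAdd n c₁)
            = Fin.castAdd (n - t₂) (Fin.castAdd t₂ c₁) := by
          apply Fin.ext; simp
        rw [hidx]
        simp [happend, Xstar, Fin.append_left]
    | right c₂ =>
        obtain ⟨d, rfl⟩ : ∃ d, c₂ = Fin.cast hn' d :=
          ⟨Fin.cast hn'.symm c₂, by apply Fin.ext; simp⟩
        induction d using Fin.addCases with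
        | left d₁ =>
            have hidx : Fin.cast hcast (Fin.natAdd l (Fin.cast hn' (Fin.castAdd (n - t₂) d₁)))
                = Fin.castAdd (n - t₂) (Fin.natAdd l d₁) := by
              apply Fin.ext; simp
            rw [hidx]
            simp [happend, Xstar, GX, Fin.append_left, Fin.append_right]
        | right d₂ =>
            have hidx : Fin.cast hcast (Fin.natAdd l (Fin.cast hn' (Fin.natAdd t₂ d₂)))
                = Fin.natAdd (l + t₂) d₂ := by
              apply Fin.ext; simp; omega
            rw [hidx]
            simp only [happend, Matrix.of_apply, Fin.append_right]
            exact (hGstar i d₂).symm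
  -- assemble
  refine ⟨Qi * P, Xstar, gstar, (isUnit_of_invertible Qi).mul hP, hgstar, ?_, by omega, ?_⟩
  · have hQmul : Q.map (algebraMap K F) * Qi.map (algebraMap K F) = 1 := by
      rw [← Matrix.map_mul, hQQi, Matrix.map_one _ (map_zero _) (map_one _)]
    have hX : happend X₁ (gabGen q k g + X₂)
        = (happend Xstar (gabGen q k gstar)).submatrix id (Fin.cast hcast)
          * Qi.map (algebraMap K F) := by
      rw [← hmain, Matrix.mul_assoc, hQmul, Matrix.mul_one]
    rw [hGpub, hX, Matrix.map_mul]
    simp only [Matrix.mul_assoc]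
    exact (Matrix.mul_assoc _ _ _).symm
  · rintro (h | ⟨j, hj⟩) <;> omega
end

section
/- Let g ∈ F_{q^m}^n with ‖g‖ = n and n ≤ m. For all integers k and i with 1 ≤ k ≤ n and 0 ≤ i ≤ n−k−1, the code Λ_i(Gab_k(g)) equals the Gabidulin code Gab_{k+i}(g). In particular, dim_{F_{q^m}} Λ_i(Gab_k(g)) = k + i. -/
open Matrix

section Aux

open Polynomial

/-- The set of roots of the `q`-polynomial `x ↦ ∑ a_j x^{q^{j}}` is a `K`-submodule of `F`. -/
noncomputable def qKernel (K F : Type*) [Field K] [Field F] [Algebra K F] [Fintype K]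
    {s : ℕ} (a : Fin s → F) : Submodule K F where
  carrier := {x | ∑ j : Fin s, a j * x ^ (Fintype.card K) ^ (j : ℕ) = 0}
  zero_mem' := by
    simp [zero_pow (pow_ne_zero _ (Fintype.card_ne_zero (α := K)))]
  add_mem' := by
    intro x y hx hy
    set q := Fintype.card K with hq
    letI : CharP K (ringChar K) := ringChar.charP K
    obtain ⟨e, hp, hcard⟩ := FiniteField.card K (ringChar K)
    haveI : Fact (Nat.Prime (ringChar K)) := ⟨hp⟩
    haveI : CharP F (ringChar K) :=
      charP_of_injective_algebraMap (algebraMap K F).injective (ringChar K)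
    have key : ∀ j : ℕ, (x + y) ^ q ^ j = x ^ q ^ j + y ^ q ^ j := by
      intro j
      have : q ^ j = (ringChar K) ^ ((e : ℕ) * j) := by rw [pow_mul, ← hcard]
      rw [this, add_pow_char_pow]
    simp only [Set.mem_setOf_eq] at hx hy ⊢
    calc ∑ j : Fin s, a j * (x + y) ^ q ^ (j : ℕ)
        = ∑ j : Fin s, (a j * x ^ q ^ (j : ℕ) + a j * y ^ q ^ (j : ℕ)) := by
          refine Finset.sum_congr rfl fun j _ => ?_
          rw [key, mul_add]
      _ = 0 := by rw [Finset.sum_add_distrib, hx, hy, add_zero]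
  smul_mem' := by
    intro c x hx
    set q := Fintype.card K with hq
    simp only [Set.mem_setOf_eq] at hx ⊢
    have key : ∀ j : ℕ, (c • x) ^ q ^ j = (algebraMap K F c) * x ^ q ^ j := by
      intro j
      rw [Algebra.smul_def, mul_pow, ← map_pow, FiniteField.pow_card_pow]
    calc ∑ j : Fin s, a j * (c • x) ^ q ^ (j : ℕ)
        = (algebraMap K F c) * ∑ j : Fin s, a j * x ^ q ^ (j : ℕ) := by
          rw [Finset.mul_sum]
          refine Finset.sum_congr rfl fun j _ => ?_
          rw [key]; ring
      _ = 0 := by rw [hx, mul_zero]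

/-- The rows `g^{[0]}, …, g^{[s-1]}` are linearly independent over `F` when the coordinates of
`g` are linearly independent over `K` and `s ≤ n`. -/
theorem gab_rows_linearIndependent (K F : Type*) [Field K] [Field F] [Algebra K F]
    [Fintype K] [Fintype F] {n s : ℕ} (g : Fin n → F) (hg : rankWeight K g = n) (hs : s ≤ n) :
    LinearIndependent F (fun (j : Fin s) (c : Fin n) => g c ^ (Fintype.card K) ^ (j : ℕ)) := by
  classical
  set q := Fintype.card K with hq
  have hq1 : 1 < q := Fintype.one_lt_card
  rw [Fintype.linearIndependent_iff]
  intro a ha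
  by_contra hcon
  push_neg at hcon
  obtain ⟨j0, hj0⟩ := hcon
  -- the associated polynomial
  set P : F[X] := ∑ j : Fin s, C (a j) * X ^ (q ^ (j : ℕ)) with hP
  have hcoeff : P.coeff (q ^ (j0 : ℕ)) = a j0 := by
    rw [hP, Polynomial.finset_sum_coeff]
    rw [Finset.sum_eq_single j0]
    · simp
    · intro j _ hne
      simp only [coeff_C_mul, coeff_X_pow]
      have h2 : ¬ q ^ (j0 : ℕ) = q ^ (j : ℕ) := by
        intro h
        exact hne (Fin.ext (Nat.pow_right_injective hq1 h.symm))
      simp [h2]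
    · simp
  have hPne : P ≠ 0 := fun h => hj0 (by rw [← hcoeff, h, Polynomial.coeff_zero])
  have hn0 : 0 < n := lt_of_lt_of_le (Fin.pos j0) hs
  -- degree bound
  have hdeg : P.natDegree < q ^ n := by
    apply lt_of_le_of_lt (Polynomial.natDegree_sum_le _ _)
    refine (Finset.fold_max_lt _).mpr ?_
    constructor
    · exact pow_pos (lt_trans Nat.zero_lt_one hq1) n
    · intro j _
      apply lt_of_le_of_lt (Polynomial.natDegree_C_mul_le _ _)
      apply lt_of_le_of_lt (Polynomial.natDegree_X_pow_le _)
      exact Nat.pow_lt_pow_right hq1 (lt_of_lt_of_le j.isLt hs)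
  -- every element of the span is a root
  have hZ : Submodule.span K (Set.range g) ≤ qKernel K F a := by
    rw [Submodule.span_le]
    rintro _ ⟨c, rfl⟩
    have := congrFun ha c
    show ∑ j : Fin s, a j * g c ^ q ^ (j : ℕ) = 0
    simpa [Finset.sum_apply] using this
  have hroot : ∀ x ∈ Submodule.span K (Set.range g), P.IsRoot x := by
    intro x hx
    have hx' := hZ hx
    simp only [qKernel, Submodule.mem_mk, AddSubmonoid.mem_mk, AddSubsemigroup.mem_mk,
      Set.mem_setOf_eq] at hx'
    simp only [Polynomial.IsRoot, hP, Polynomial.eval_finset_sum, Polynomial.eval_mul,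
      Polynomial.eval_C, Polynomial.eval_pow, Polynomial.eval_X]
    exact hx'
  -- cardinality contradiction
  have hsub : (Submodule.span K (Set.range g) : Set F) ⊆ ↑P.roots.toFinset := by
    intro x hx
    simp only [Finset.coe_sort_coe, Multiset.mem_toFinset, Finset.mem_coe]
    exact (Polynomial.mem_roots hPne).mpr (hroot x hx)
  have hcard1 : Nat.card (Submodule.span K (Set.range g)) ≤ Nat.card (↑P.roots.toFinset : Set F) :=
    Nat.card_mono (Set.toFinite _) hsub
  have hcard2 : Nat.card (Submodule.span K (Set.range g)) = q ^ n := by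
    rw [Nat.card_eq_fintype_card, Module.card_eq_pow_finrank (K := K)]
    congr 1
  have hcard3 : Nat.card (↑P.roots.toFinset : Set F) ≤ P.natDegree := by
    rw [Nat.card_coe_set_eq, Set.ncard_coe_finset]
    exact le_trans (Multiset.toFinset_card_le _) (Polynomial.card_roots' P)
  omega

end Aux

/-- Let `g ∈ F_{q^m}^n` with `‖g‖ = n` and `n ≤ m`. For all `1 ≤ k ≤ n` and
`0 ≤ i ≤ n-k-1`, the code `Λ_i(Gab_k(g))` equals `Gab_{k+i}(g)`; in particular its
dimension over `F_{q^m}` is `k + i`. -/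
theorem statement7 (K F : Type*) [Field K] [Field F] [Algebra K F] [Fintype K] [Fintype F]
    (m n : ℕ) (hm : Fintype.card F = Fintype.card K ^ m) (hnm : n ≤ m)
    (g : Fin n → F) (hg : rankWeight K g = n)
    (k i : ℕ) (hk1 : 1 ≤ k) (hkn : k ≤ n) (hi : i ≤ n - k - 1) :
    Submodule.span F
        (Set.range (lam (Fintype.card K) i (gabGen (Fintype.card K) k g))) =
      gabCode (Fintype.card K) (k + i) g ∧
    Module.finrank F (Submodule.span F
        (Set.range (lam (Fintype.card K) i (gabGen (Fintype.card K) k g)))) = k + i := by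
  classical
  set q := Fintype.card K with hq
  have hq1 : 1 < q := Fintype.one_lt_card
  have hk0 : 0 < k := hk1
  have hs : k + i ≤ n := by omega
  -- the ranges of the two generator matrices coincide
  have hrange : Set.range (lam q i (gabGen q k g)) = Set.range (gabGen q (k + i) g) := by
    ext v
    constructor
    · rintro ⟨r, rfl⟩
      have hmod : (r : ℕ) % k < k := Nat.mod_lt _ hk0
      have hdiv : (r : ℕ) / k < i + 1 := Nat.div_lt_of_lt_mul (by
        exact Nat.lt_of_lt_of_eq r.isLt (Nat.mul_comm _ _))
      refine ⟨⟨(r : ℕ) % k + (r : ℕ) / k, by omega⟩, ?_⟩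
      funext c
      show g c ^ q ^ ((r : ℕ) % k + (r : ℕ) / k) = _
      simp only [lam, gabGen, Matrix.of_apply]
      rw [← pow_mul, ← pow_add]
    · rintro ⟨e, rfl⟩
      set a := min (e : ℕ) (k - 1) with hadef
      set b := (e : ℕ) - a with hbdef
      have ha : a < k := by omega
      have hb : b ≤ i := by
        have := e.isLt
        omega
      have hab : a + b = (e : ℕ) := by omega
      have hr : b * k + a < (i + 1) * k := by
        calc b * k + a < b * k + k := by omega
          _ = (b + 1) * k := by ring
          _ ≤ (i + 1) * k := Nat.mul_le_mul_right _ (by omega)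
      refine ⟨⟨b * k + a, hr⟩, ?_⟩
      have hmod : (b * k + a) % k = a := by
        rw [Nat.mul_comm b k, Nat.mul_add_mod, Nat.mod_eq_of_lt ha]
      have hdiv : (b * k + a) / k = b := by
        rw [Nat.mul_comm b k, Nat.mul_add_div hk0, Nat.div_eq_of_lt ha, Nat.add_zero]
      funext c
      show _ = g c ^ q ^ (e : ℕ)
      simp only [lam, gabGen, Matrix.of_apply, hmod, hdiv]
      rw [← pow_mul, ← pow_add, hab]
  have hli : LinearIndependent F (fun (j : Fin (k + i)) (c : Fin n) => g c ^ q ^ (j : ℕ)) :=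
    gab_rows_linearIndependent K F g hg hs
  have hspan : Submodule.span F (Set.range (lam q i (gabGen q k g))) =
      gabCode q (k + i) g := by
    rw [gabCode, hrange]
  refine ⟨hspan, ?_⟩
  rw [hspan, gabCode]
  have : Set.range (gabGen q (k + i) g) =
      Set.range (fun (j : Fin (k + i)) (c : Fin n) => g c ^ q ^ (j : ℕ)) := rfl
  rw [this, finrank_span_eq_card hli, Fintype.card_fin]
end

section
/- Let ℓ, k, n be positive integers with ℓ < n and 1 ≤ k < n ≤ m. Let G be the canonical generator matrix of a Gabidulin code Gab_k(g) with g ∈ F_{q^m}^n, ‖g‖ = n, let X be any k×ℓ matrix over F_{q^m}, and let A ⊆ F_{q^m}^{ℓ+n} be the code generated by the matrix (X | G). Then for every integer i with 0 ≤ i ≤ n−k−1, k + i ≤ dim_{F_{q^m}} Λ_i(A) ≤ k + i + d, where d = min{(i+1)k, ℓ}. -/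
open Matrix

section Helpers

variable {K F : Type*} [Field K] [Field F] [Algebra K F] [Fintype K] [Fintype F]

lemma qpow_add (x y : F) (t : ℕ) :
    (x + y) ^ (Fintype.card K) ^ t = x ^ (Fintype.card K) ^ t + y ^ (Fintype.card K) ^ t := by
  obtain ⟨p, hpc⟩ := CharP.exists K
  haveI := hpc
  obtain ⟨e, hp, hcard⟩ := FiniteField.card K p
  haveI : Fact p.Prime := ⟨hp⟩
  haveI : CharP F p := charP_of_injective_algebraMap (algebraMap K F).injective p
  rw [hcard, ← pow_mul]
  exact add_pow_char_pow x y p _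

lemma qpow_smul (c : K) (x : F) (t : ℕ) :
    (c • x) ^ (Fintype.card K) ^ t = c • (x ^ (Fintype.card K) ^ t) := by
  rw [Algebra.smul_def, Algebra.smul_def, mul_pow, ← map_pow, FiniteField.pow_card_pow]

/-- Moore-type independence: if the coordinates of `g` are `K`-linearly independent
(spanning a space of `K`-dimension `n`), then `g^{[0]}, …, g^{[s-1]}` are
`F`-linearly independent for `s ≤ n`. -/
lemma moore_indep {n s : ℕ} (g : Fin n → F)
    (hg : Module.finrank K (Submodule.span K (Set.range g)) = n) (hs : s ≤ n) :
    LinearIndependent F (fun j : Fin s => fun c => g c ^ (Fintype.card K) ^ (j : ℕ)) := by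
  classical
  set q := Fintype.card K with hqdef
  have hq : 1 < q := Fintype.one_lt_card
  rw [Fintype.linearIndependent_iff]
  intro a ha
  by_contra hcon
  push_neg at hcon
  obtain ⟨j0, hj0⟩ := hcon
  set P : Polynomial F := ∑ j : Fin s, Polynomial.C (a j) * Polynomial.X ^ (q ^ (j : ℕ))
    with hP
  have hPcoeff : ∀ j : Fin s, P.coeff (q ^ (j : ℕ)) = a j := by
    intro j
    rw [hP, Polynomial.finset_sum_coeff]
    rw [Finset.sum_eq_single j]
    · simp
    · intro b _ hb
      have hne : ¬ (q ^ (b : ℕ) = q ^ (j : ℕ)) := fun h =>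
        hb (Fin.ext (Nat.pow_right_injective hq h))
      rw [Polynomial.coeff_C_mul, Polynomial.coeff_X_pow, if_neg (fun h => hne h.symm), mul_zero]
    · simp
  have hPne : P ≠ 0 := fun h => hj0 (by rw [← hPcoeff j0, h, Polynomial.coeff_zero])
  have hEval : ∀ x : F, P.eval x = ∑ j : Fin s, a j * x ^ (q ^ (j : ℕ)) := by
    intro x
    rw [hP, Polynomial.eval_finset_sum]
    simp
  have heval : ∀ x ∈ Submodule.span K (Set.range g), P.eval x = 0 := by
    intro x hx
    induction hx using Submodule.span_induction with
    | mem x hxr =>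
        obtain ⟨c, rfl⟩ := hxr
        rw [hEval]
        have hc := congrFun ha c
        simpa [Finset.sum_apply, Pi.smul_apply, smul_eq_mul] using hc
    | zero =>
        rw [hEval]
        have : ∀ j : Fin s, (0 : F) ^ (q ^ (j : ℕ)) = 0 := fun j =>
          zero_pow (by positivity)
        simp [this]
    | add x y _ _ hx hy =>
        rw [hEval] at hx hy ⊢
        have : ∀ j : Fin s, a j * (x + y) ^ q ^ (j : ℕ)
            = a j * x ^ q ^ (j : ℕ) + a j * y ^ q ^ (j : ℕ) := by
          intro j
          rw [qpow_add, mul_add]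
        rw [Finset.sum_congr rfl fun j _ => this j, Finset.sum_add_distrib, hx, hy, add_zero]
    | smul c x _ hx =>
        rw [hEval] at hx ⊢
        have : ∀ j : Fin s, a j * (c • x) ^ q ^ (j : ℕ)
            = c • (a j * x ^ q ^ (j : ℕ)) := by
          intro j
          rw [qpow_smul, Algebra.mul_smul_comm]
        rw [Finset.sum_congr rfl fun j _ => this j, ← Finset.smul_sum, hx, smul_zero]
  -- counting
  set W := Submodule.span K (Set.range g) with hW
  haveI : Fintype W := Fintype.ofFinite W
  have hcardW : Fintype.card W = q ^ n := by
    rw [Module.card_eq_pow_finrank (K := K) (V := W), hg]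
  have hroots : Fintype.card W ≤ P.natDegree := by
    have hmem : ∀ x : W, (x : F) ∈ P.roots.toFinset := by
      intro x
      rw [Multiset.mem_toFinset, Polynomial.mem_roots hPne]
      exact heval x x.2
    calc Fintype.card W ≤ P.roots.toFinset.card := by
          rw [← Fintype.card_coe]
          apply Fintype.card_le_of_injective (fun x : W => (⟨(x : F), hmem x⟩ : P.roots.toFinset))
          intro x y hxy
          exact Subtype.ext (by simpa using congrArg Subtype.val hxy)
      _ ≤ Multiset.card P.roots := Multiset.toFinset_card_le _
      _ ≤ P.natDegree := Polynomial.card_roots' P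
  have hdeg : P.natDegree ≤ q ^ (n - 1) := by
    rw [hP]
    apply Polynomial.natDegree_sum_le_of_forall_le
    intro j _
    calc (Polynomial.C (a j) * Polynomial.X ^ (q ^ (j : ℕ))).natDegree
        ≤ (Polynomial.X ^ (q ^ (j : ℕ)) : Polynomial F).natDegree :=
          Polynomial.natDegree_C_mul_le _ _
      _ = q ^ (j : ℕ) := Polynomial.natDegree_X_pow _
      _ ≤ q ^ (n - 1) := Nat.pow_le_pow_right (le_of_lt hq) (by omega)
  have hn1 : 1 ≤ n := le_trans (Nat.one_le_iff_ne_zero.mpr (by rintro rfl; exact j0.elim0)) hs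
  have hlt : q ^ (n - 1) < q ^ n := Nat.pow_lt_pow_right hq (by omega)
  omega

end Helpers

/-- Let `ℓ, k, n` be positive integers with `ℓ < n` and `1 ≤ k < n ≤ m`,
let `G` be the canonical generator matrix of `Gab_k(g)` with `‖g‖ = n`, let `X` be any
`k×ℓ` matrix, and let `A` be the code generated by `(X | G)`. Then for every
`0 ≤ i ≤ n-k-1`, `k + i ≤ dim Λ_i(A) ≤ k + i + min{(i+1)k, ℓ}`. -/
theorem statement8 (K F : Type*) [Field K] [Field F] [Algebra K F] [Fintype K] [Fintype F]
    (m l k n : ℕ) (hm : Fintype.card F = Fintype.card K ^ m)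
    (hl1 : 1 ≤ l) (hln : l < n) (hk1 : 1 ≤ k) (hkn : k < n) (hnm : n ≤ m)
    (g : Fin n → F) (hg : rankWeight K g = n)
    (X : Matrix (Fin k) (Fin l) F) (i : ℕ) (hi : i ≤ n - k - 1) :
    k + i ≤ Module.finrank F (Submodule.span F (Set.range
        (lam (Fintype.card K) i (happend X (gabGen (Fintype.card K) k g))))) ∧
    Module.finrank F (Submodule.span F (Set.range
        (lam (Fintype.card K) i (happend X (gabGen (Fintype.card K) k g))))) ≤
      k + i + min ((i + 1) * k) l := by
  classical
  set q := Fintype.card K with hqdef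
  have hg' : Module.finrank K (Submodule.span K (Set.range g)) = n := hg
  have hk0 : 0 < k := hk1
  set M := lam q i (happend X (gabGen q k g)) with hMdef
  set W := Submodule.span F (Set.range M) with hWdef
  let π : (Fin (l + n) → F) →ₗ[F] (Fin n → F) := LinearMap.funLeft F F (fun c => Fin.natAdd l c)
  have hπM : ∀ r : Fin ((i + 1) * k),
      π (M r) = fun c => g c ^ q ^ ((r : ℕ) % k + (r : ℕ) / k) := by
    intro r
    funext c
    show M r (Fin.natAdd l c) = _
    have h1 : M r (Fin.natAdd l c)
        = (happend X (gabGen q k g)) ⟨(r : ℕ) % k, Nat.mod_lt _ hk0⟩ (Fin.natAdd l c)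
          ^ q ^ ((r : ℕ) / k) := rfl
    have h2 : (happend X (gabGen q k g)) ⟨(r : ℕ) % k, Nat.mod_lt _ hk0⟩ (Fin.natAdd l c)
        = g c ^ q ^ ((r : ℕ) % k) := by
      simp [happend, gabGen, Fin.append_right]
    rw [h1, h2, ← pow_mul, ← pow_add]
  set G' : Fin (k + i) → (Fin n → F) := fun s => fun c => g c ^ q ^ (s : ℕ) with hG'def
  -- upper bound 1: finrank W ≤ (i+1)*k
  have hub1 : Module.finrank F W ≤ (i + 1) * k := by
    have := finrank_range_le_card (R := F) M
    simpa [Set.finrank] using this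
  -- kernel of π has dimension l
  have hπsurj : Function.Surjective π := by
    apply LinearMap.funLeft_surjective_of_injective
    intro a b hab
    have := congrArg Fin.val hab
    simp only [Fin.natAdd] at this
    exact Fin.ext (by omega)
  have hkerπ : Module.finrank F (LinearMap.ker π) = l := by
    have hrn := LinearMap.finrank_range_add_finrank_ker π
    rw [LinearMap.range_eq_top.mpr hπsurj, finrank_top] at hrn
    have h1 : Module.finrank F (Fin (l + n) → F) = l + n := by
      simp [Module.finrank_pi]
    have h2 : Module.finrank F (Fin n → F) = n := by
      simp [Module.finrank_pi]
    rw [h1, h2] at hrn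
    omega
  -- map π W is inside the span of G'
  have hmaple : Submodule.map π W ≤ Submodule.span F (Set.range G') := by
    rw [hWdef, Submodule.map_span, Submodule.span_le]
    rintro _ ⟨_, ⟨r, rfl⟩, rfl⟩
    have hmd : (r : ℕ) % k + (r : ℕ) / k < k + i := by
      have h1 : (r : ℕ) % k < k := Nat.mod_lt _ hk0
      have h2 : (r : ℕ) / k < i + 1 :=
        Nat.div_lt_of_lt_mul (by simpa [Nat.mul_comm] using r.isLt)
      omega
    refine Submodule.subset_span ⟨⟨(r : ℕ) % k + (r : ℕ) / k, hmd⟩, ?_⟩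
    simp only [Function.comp_apply, hπM r]
    rfl
  -- upper bound 2: finrank W ≤ (k + i) + l
  have hrk := LinearMap.finrank_range_add_finrank_ker (π.domRestrict W)
  have hrange : Module.finrank F (LinearMap.range (π.domRestrict W))
      = Module.finrank F (Submodule.map π W) := by
    rw [LinearMap.range_domRestrict]
  have hkerle : Module.finrank F (LinearMap.ker (π.domRestrict W)) ≤ l := by
    have hkmem : ∀ x : LinearMap.ker (π.domRestrict W),
        (W.subtype.comp (LinearMap.ker (π.domRestrict W)).subtype) x ∈ LinearMap.ker π := by
      intro x
      have hx := x.2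
      rw [LinearMap.mem_ker, LinearMap.domRestrict_apply] at hx
      simpa [LinearMap.mem_ker] using hx
    have hinj : Function.Injective
        (LinearMap.codRestrict (LinearMap.ker π)
          (W.subtype.comp (LinearMap.ker (π.domRestrict W)).subtype) hkmem) := by
      intro x y hxy
      have h := congrArg Subtype.val hxy
      simp only [LinearMap.codRestrict_apply, LinearMap.comp_apply] at h
      exact Subtype.ext (Subtype.ext (by simpa using h))
    exact le_trans (LinearMap.finrank_le_finrank_of_injective hinj) (le_of_eq hkerπ)
  have hmapfr : Module.finrank F (Submodule.map π W) ≤ k + i := by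
    calc Module.finrank F (Submodule.map π W)
        ≤ Module.finrank F (Submodule.span F (Set.range G')) := Submodule.finrank_mono hmaple
      _ ≤ k + i := by simpa [Set.finrank] using finrank_range_le_card (R := F) G'
  have hub2 : Module.finrank F W ≤ (k + i) + l := by omega
  -- lower bound
  have hind : LinearIndependent F G' := moore_indep (K := K) g hg' (by omega)
  have hlow : k + i ≤ Module.finrank F W := by
    have h1 : Submodule.span F (Set.range G') ≤ Submodule.map π W := by
      rw [Submodule.span_le]
      rintro _ ⟨s, rfl⟩
      by_cases hsk : (s : ℕ) < k
      · refine ⟨M ⟨(s : ℕ), lt_of_lt_of_le hsk (Nat.le_mul_of_pos_left k (Nat.succ_pos i))⟩,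
          Submodule.subset_span ⟨_, rfl⟩, ?_⟩
        rw [hπM]
        funext c
        show g c ^ q ^ ((s : ℕ) % k + (s : ℕ) / k) = g c ^ q ^ (s : ℕ)
        rw [Nat.mod_eq_of_lt hsk, Nat.div_eq_of_lt hsk, Nat.add_zero]
      · push_neg at hsk
        have hsi : (s : ℕ) < k + i := s.isLt
        have hb : k * ((s : ℕ) - k + 1) + (k - 1) < (i + 1) * k := by
          have h1 : (s : ℕ) - k + 1 ≤ i := by omega
          have h2 : k * ((s : ℕ) - k + 1) ≤ k * i := Nat.mul_le_mul_left k h1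
          have h3 : (i + 1) * k = k * i + k := by ring
          omega
        refine ⟨M ⟨k * ((s : ℕ) - k + 1) + (k - 1), hb⟩, Submodule.subset_span ⟨_, rfl⟩, ?_⟩
        rw [hπM]
        funext c
        show g c ^ q ^ ((k * ((s : ℕ) - k + 1) + (k - 1)) % k
            + (k * ((s : ℕ) - k + 1) + (k - 1)) / k) = g c ^ q ^ (s : ℕ)
        rw [Nat.mul_add_mod, Nat.mod_eq_of_lt (by omega), Nat.mul_add_div hk0,
          Nat.div_eq_of_lt (by omega)]
        congr 2
        omega
    have h2 : k + i = Module.finrank F (Submodule.span F (Set.range G')) := by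
      rw [finrank_span_eq_card hind, Fintype.card_fin]
    rw [h2]
    calc Module.finrank F (Submodule.span F (Set.range G'))
        ≤ Module.finrank F (Submodule.map π W) := Submodule.finrank_mono h1
      _ ≤ Module.finrank F W := Submodule.finrank_map_le π W
  refine ⟨hlow, ?_⟩
  rcases Nat.le_total ((i + 1) * k) l with h | h
  · rw [min_eq_left h]
    omega
  · rw [min_eq_right h]
    omega
end

section
/- Let ℓ ≥ 0, n ≥ 1, 0 ≤ s < n, and let P ∈ GL_{n+ℓ}(F_{q^m}) be such that its inverse has the block form P^{−1} = [[Q₁₁, Q₁₂],[Q₂₁, Q₂₂]] where Q₁₁ is ℓ×ℓ over F_{q^m}, Q₁₂ is ℓ×n over F_{q^m} with ‖Q₁₂‖ ≤ s, Q₂₁ is n×ℓ over F_{q^m}, and Q₂₂ is n×n with all entries in the subfield F_q. Then there exist matrices L, R ∈ GL_n(F_q), P₁₁ ∈ GL_{ℓ+s}(F_{q^m}), P₂₁ an (n−s)×(ℓ+s) matrix over F_{q^m}, and P₂₂ ∈ GL_{n−s}(F_q), such that P = diag(I_ℓ, L) · [[P₁₁, 0],[P₂₁, P₂₂]] · diag(I_ℓ,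 R), where diag(I_ℓ, L) denotes the block-diagonal matrix with blocks I_ℓ and L. -/
open Matrix

lemma exists_isUnit_cols_mem {K : Type*} [Field K] {n t : ℕ}
    (W : Submodule K (Fin n → K)) (ht : t ≤ Module.finrank K W) :
    ∃ M : Matrix (Fin n) (Fin n) K, IsUnit M ∧ ∀ j : Fin n, (j : ℕ) < t → Mᵀ j ∈ W := by
  obtain ⟨W', hc⟩ := Submodule.exists_isCompl W
  have hdn : Module.finrank K W + Module.finrank K W' = n := by
    rw [Submodule.finrank_add_eq_of_isCompl hc, Module.finrank_fin_fun]
  set d := Module.finrank K W with hd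
  set d' := Module.finrank K W' with hd'
  let bW : Module.Basis (Fin d) K W := Module.finBasis K W
  let bW' : Module.Basis (Fin d') K W' := Module.finBasis K W'
  let b0 : Module.Basis (Fin d ⊕ Fin d') K (Fin n → K) :=
    (bW.prod bW').map (Submodule.prodEquivOfIsCompl W W' hc)
  let b : Module.Basis (Fin n) K (Fin n → K) := b0.reindex (finSumFinEquiv.trans (finCongr hdn))
  refine ⟨(Pi.basisFun K (Fin n)).toMatrix ⇑b,
    @isUnit_of_invertible _ _ _ ((Pi.basisFun K (Fin n)).invertibleToMatrix b), ?_⟩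
  intro j hj
  have hcol : ((Pi.basisFun K (Fin n)).toMatrix ⇑b)ᵀ j = b j := by
    funext i
    simp [Module.Basis.toMatrix, Matrix.transpose_apply]
  rw [hcol]
  have hbj : b j = b0 (Sum.inl ⟨(j : ℕ), lt_of_lt_of_le hj ht⟩) := by
    simp only [b, Module.Basis.reindex_apply]
    congr 1
    rw [Equiv.symm_apply_eq]
    apply Fin.ext
    simp
  rw [hbj]
  show (Submodule.prodEquivOfIsCompl W W' hc) ((bW.prod bW') (Sum.inl _)) ∈ W
  rw [Submodule.coe_prodEquivOfIsCompl']
  rw [Module.Basis.prod_apply_inl_fst, Module.Basis.prod_apply_inl_snd]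
  simp

lemma blocks_eq_fromBlocks {α : Type*} {a b c d : ℕ} (A : Matrix (Fin a) (Fin c) α)
    (B : Matrix (Fin a) (Fin d) α) (C : Matrix (Fin b) (Fin c) α)
    (D : Matrix (Fin b) (Fin d) α) :
    blocks A B C D =
      (Matrix.fromBlocks A B C D).submatrix ⇑finSumFinEquiv.symm ⇑finSumFinEquiv.symm := by
  funext i j
  refine Fin.addCases (fun i => ?_) (fun i => ?_) i <;>
    refine Fin.addCases (fun j => ?_) (fun j => ?_) j <;>
      simp [blocks, Matrix.submatrix_apply, finSumFinEquiv_symm_apply_castAdd,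
        finSumFinEquiv_symm_apply_natAdd, Fin.append_left, Fin.append_right]

set_option maxHeartbeats 1000000 in
/-- if `P ∈ GL_{n+ℓ}(F_{q^m})` has inverse `[[Q₁₁, Q₁₂],[Q₂₁, Q₂₂]]` with
`‖Q₁₂‖ ≤ s < n` and `Q₂₂` defined over the subfield `F_q`, then
`P = diag(I_ℓ, L) · [[P₁₁, 0],[P₂₁, P₂₂]] · diag(I_ℓ, R)` with `L, R ∈ GL_n(F_q)`,
`P₁₁ ∈ GL_{ℓ+s}(F_{q^m})` and `P₂₂ ∈ GL_{n-s}(F_q)`. -/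
theorem statement10 (K F : Type*) [Field K] [Field F] [Algebra K F] [Fintype K] [Fintype F]
    (l n s : ℕ) (hn : 1 ≤ n) (hs : s < n)
    (P : Matrix (Fin (l + n)) (Fin (l + n)) F) (hP : IsUnit P)
    (Q11 : Matrix (Fin l) (Fin l) F) (Q12 : Matrix (Fin l) (Fin n) F)
    (Q21 : Matrix (Fin n) (Fin l) F) (Q22 : Matrix (Fin n) (Fin n) K)
    (hQ12 : colRank K Q12 ≤ s)
    (hPinv : P⁻¹ = blocks Q11 Q12 Q21 (Q22.map (algebraMap K F))) :
    ∃ (Lm Rm : Matrix (Fin n) (Fin n) K) (P11 : Matrix (Fin (l + s)) (Fin (l + s)) F)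
      (P21 : Matrix (Fin (n - s)) (Fin (l + s)) F)
      (P22 : Matrix (Fin (n - s)) (Fin (n - s)) K),
      IsUnit Lm ∧ IsUnit Rm ∧ IsUnit P11 ∧ IsUnit P22 ∧
      P = blocks (1 : Matrix (Fin l) (Fin l) F) 0 0 (Lm.map (algebraMap K F)) *
          (blocks P11 0 P21 (P22.map (algebraMap K F))).submatrix
            (Fin.cast (by omega)) (Fin.cast (by omega)) *
          blocks (1 : Matrix (Fin l) (Fin l) F) 0 0 (Rm.map (algebraMap K F)) := by
  classical
  have halg : Function.Injective (algebraMap K F) := (algebraMap K F).injective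
  -- Step 1 : construct L
  let φ : (Fin n → K) →ₗ[K] (Fin l → F) :=
    (Q12.mulVecLin.restrictScalars K) ∘ₗ
      (LinearMap.pi fun i => (Algebra.linearMap K F) ∘ₗ (LinearMap.proj i))
  have hφ : ∀ v, φ v = Q12 *ᵥ (fun j => algebraMap K F (v j)) := fun v => rfl
  have hrange : LinearMap.range φ ≤ Submodule.span K (Set.range Q12ᵀ) := by
    rintro x ⟨v, rfl⟩
    have hx : φ v = ∑ j, v j • Q12ᵀ j := by
      funext i
      simp [hφ, Matrix.mulVec, dotProduct, Finset.sum_apply, Algebra.smul_def, mul_comm]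
    rw [hx]
    exact Submodule.sum_mem _ fun j _ =>
      Submodule.smul_mem _ _ (Submodule.subset_span ⟨j, rfl⟩)
  have hker : n - s ≤ Module.finrank K (LinearMap.ker φ) := by
    have h1 := LinearMap.finrank_range_add_finrank_ker φ
    rw [Module.finrank_fin_fun] at h1
    have h2 : Module.finrank K (LinearMap.range φ) ≤ s :=
      le_trans (Submodule.finrank_mono hrange) hQ12
    omega
  obtain ⟨M₁, hM₁u, hM₁c⟩ := exists_isUnit_cols_mem (LinearMap.ker φ) hker
  let L : Matrix (Fin n) (Fin n) K := M₁.submatrix ⇑(Equiv.refl (Fin n)) ⇑(Fin.revPerm)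
  have hLu : IsUnit L := (isUnit_submatrix_equiv (Equiv.refl (Fin n)) Fin.revPerm).mpr hM₁u
  have hL0 : ∀ (i : Fin l) (j : Fin n), s ≤ (j : ℕ) →
      (Q12 * L.map (algebraMap K F)) i j = 0 := by
    intro i j hj
    have hcol : (fun k => L k j) ∈ LinearMap.ker φ := by
      have he : (fun k => L k j) = M₁ᵀ (Fin.rev j) := rfl
      rw [he]
      refine hM₁c _ ?_
      have : ((Fin.rev j : Fin n) : ℕ) = n - 1 - (j : ℕ) := Fin.val_rev j ▸ by omega
      omega
    have h0 := LinearMap.mem_ker.mp hcol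
    have he : (Q12 * L.map (algebraMap K F)) i j = φ (fun k => L k j) i := by
      simp [hφ, Matrix.mul_apply, Matrix.mulVec, dotProduct, Matrix.map_apply]
    rw [he, h0]
    rfl
  -- Step 2 : construct R
  set B : Matrix (Fin n) (Fin n) K := Q22 * L with hB
  let C : Matrix (Fin (n - s)) (Fin n) K :=
    Matrix.of fun j k => B k ⟨s + (j : ℕ), by omega⟩
  let ψ : (Fin n → K) →ₗ[K] (Fin (n - s) → K) := C.mulVecLin
  have hkerψ : s ≤ Module.finrank K (LinearMap.ker ψ) := by
    have h1 := LinearMap.finrank_range_add_finrank_ker ψ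
    rw [Module.finrank_fin_fun] at h1
    have h2 : Module.finrank K (LinearMap.range ψ) ≤ n - s := by
      have := Submodule.finrank_le (LinearMap.range ψ)
      rwa [Module.finrank_fin_fun] at this
    omega
  obtain ⟨M₂, hM₂u, hM₂c⟩ := exists_isUnit_cols_mem (LinearMap.ker ψ) hkerψ
  let R : Matrix (Fin n) (Fin n) K := M₂ᵀ
  have hRu : IsUnit R := by
    rw [Matrix.isUnit_iff_isUnit_det, Matrix.det_transpose,
      ← Matrix.isUnit_iff_isUnit_det]
    exact hM₂u
  have hR0 : ∀ (i j : Fin n), (i : ℕ) < s → s ≤ (j : ℕ) → (R * B) i j = 0 := by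
    intro i j hi hj
    have hm := hM₂c i hi
    have h0 := congrFun (LinearMap.mem_ker.mp hm) ⟨(j : ℕ) - s, by omega⟩
    have hjj : (⟨s + ((j : ℕ) - s), by omega⟩ : Fin n) = j := Fin.ext (show s + ((j : ℕ) - s) = (j : ℕ) by omega)
    simp only [ψ, Matrix.mulVecLin_apply, Matrix.mulVec, dotProduct, C,
      Matrix.of_apply, Pi.zero_apply, hjj] at h0
    rw [Matrix.mul_apply]
    simpa [R, Matrix.transpose_apply, mul_comm] using h0
  -- block world
  have hN : l + n = (l + s) + (n - s) := by omega
  let eι : (Fin l ⊕ Fin n) ≃ Fin (l + n) := finSumFinEquiv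
  let eκ : (Fin (l + s) ⊕ Fin (n - s)) ≃ Fin (l + n) := finSumFinEquiv.trans (finCongr hN.symm)
  let c : (Fin (l + s) ⊕ Fin (n - s)) ≃ (Fin l ⊕ Fin n) := eκ.trans eι.symm
  have hLmu : IsUnit (L.map (algebraMap K F)) := by
    have := hLu.map ((algebraMap K F).mapMatrix)
    rwa [RingHom.mapMatrix_apply] at this
  have hRmu : IsUnit (R.map (algebraMap K F)) := by
    have := hRu.map ((algebraMap K F).mapMatrix)
    rwa [RingHom.mapMatrix_apply] at this
  let Pb := P.submatrix ⇑eι ⇑eι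
  have hPbu : IsUnit Pb := (Matrix.isUnit_submatrix_equiv eι eι).mpr hP
  have hPbinv : Pb⁻¹ = Matrix.fromBlocks Q11 Q12 Q21 (Q22.map (algebraMap K F)) := by
    show (P.submatrix ⇑eι ⇑eι)⁻¹ = _
    rw [Matrix.inv_submatrix_equiv, hPinv, blocks_eq_fromBlocks, Matrix.submatrix_submatrix]
    simp only [eι]
    rw [Equiv.symm_comp_self, Matrix.submatrix_id_id]
  let Dl := Matrix.fromBlocks (1 : Matrix (Fin l) (Fin l) F) 0 0 (L.map (algebraMap K F))
  let Dr := Matrix.fromBlocks (1 : Matrix (Fin l) (Fin l) F) 0 0 (R.map (algebraMap K F))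
  have hDlu : IsUnit Dl := Matrix.isUnit_fromBlocks_zero₁₂.mpr ⟨isUnit_one, hLmu⟩
  have hDru : IsUnit Dr := Matrix.isUnit_fromBlocks_zero₁₂.mpr ⟨isUnit_one, hRmu⟩
  let T₁ := Dr * Pb⁻¹ * Dl
  have hT₁ : T₁ = Matrix.fromBlocks Q11 (Q12 * (L.map (algebraMap K F)))
      ((R.map (algebraMap K F)) * Q21)
      ((R.map (algebraMap K F)) * (Q22.map (algebraMap K F) * (L.map (algebraMap K F)))) := by
    simp [T₁, Dl, Dr, hPbinv, Matrix.fromBlocks_multiply, mul_assoc]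
  have hT₁u : IsUnit T₁ := (hDru.mul (Matrix.isUnit_nonsing_inv_iff.mpr hPbu)).mul hDlu
  let T₂ := T₁.submatrix ⇑c ⇑c
  have hT₂u : IsUnit T₂ := (Matrix.isUnit_submatrix_equiv c c).mpr hT₁u
  have hc1 : ∀ (a : Fin (l + s)) (h : (a : ℕ) < l), c (Sum.inl a) = Sum.inl ⟨(a : ℕ), h⟩ := by
    intro a h
    show eι.symm (eκ (Sum.inl a)) = _
    rw [Equiv.symm_apply_eq]
    apply Fin.ext
    simp [eκ, eι]
  have hc2 : ∀ (a : Fin (l + s)) (h : l ≤ (a : ℕ)),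
      c (Sum.inl a) = Sum.inr ⟨(a : ℕ) - l, by omega⟩ := by
    intro a h
    show eι.symm (eκ (Sum.inl a)) = _
    rw [Equiv.symm_apply_eq]
    apply Fin.ext
    simp [eκ, eι]
    omega
  have hc3 : ∀ (b : Fin (n - s)), c (Sum.inr b) = Sum.inr ⟨s + (b : ℕ), by omega⟩ := by
    intro b
    show eι.symm (eκ (Sum.inr b)) = _
    rw [Equiv.symm_apply_eq]
    apply Fin.ext
    simp [eκ, eι]
    omega
  have hmapmul : (R.map (algebraMap K F)) * (Q22.map (algebraMap K F) * (L.map (algebraMap K F)))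
      = (R * (Q22 * L)).map (algebraMap K F) := by
    rw [Matrix.map_mul, Matrix.map_mul]
  have hT₂12 : T₂.toBlocks₁₂ = 0 := by
    ext a b
    show T₁ (c (Sum.inl a)) (c (Sum.inr b)) = 0
    rw [hc3]
    rcases lt_or_ge (a : ℕ) l with h | h
    · rw [hc1 a h, hT₁, Matrix.fromBlocks_apply₁₂]
      exact hL0 _ _ (by simp)
    · rw [hc2 a h, hT₁, Matrix.fromBlocks_apply₂₂, hmapmul, Matrix.map_apply]
      rw [← hB, hR0 _ _ (by simp; omega) (by simp), map_zero]
  set X := T₂.toBlocks₁₁ with hX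
  set Y := T₂.toBlocks₂₁ with hY
  set Z := T₂.toBlocks₂₂ with hZdef
  have hT₂b : T₂ = Matrix.fromBlocks X 0 Y Z := by
    conv_lhs => rw [← Matrix.fromBlocks_toBlocks T₂]
    rw [hT₂12]
  have hXZ := Matrix.isUnit_fromBlocks_zero₁₂.mp (hT₂b ▸ hT₂u)
  let Zk : Matrix (Fin (n - s)) (Fin (n - s)) K :=
    Matrix.of fun a b => (R * B) ⟨s + (a : ℕ), by omega⟩ ⟨s + (b : ℕ), by omega⟩
  have hZ : Z = Zk.map (algebraMap K F) := by
    ext a b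
    show T₁ (c (Sum.inr a)) (c (Sum.inr b)) = _
    rw [hc3, hc3, hT₁, Matrix.fromBlocks_apply₂₂, hmapmul, Matrix.map_apply]
    rw [← hB]
    rfl
  have hZku : IsUnit Zk := by
    rw [Matrix.isUnit_iff_isUnit_det]
    have hZdet : IsUnit Z.det := (Matrix.isUnit_iff_isUnit_det _).mp hXZ.2
    rw [hZ, ← RingHom.mapMatrix_apply, ← RingHom.map_det] at hZdet
    refine isUnit_iff_ne_zero.mpr (fun h => ?_)
    rw [h, map_zero] at hZdet
    exact hZdet.ne_zero rfl
  have hZinv : Z⁻¹ = (Zk⁻¹).map (algebraMap K F) := by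
    rw [hZ]
    refine Matrix.inv_eq_left_inv ?_
    rw [← Matrix.map_mul, Matrix.nonsing_inv_mul _ ((Matrix.isUnit_iff_isUnit_det _).mp hZku)]
    exact Matrix.map_one _ (map_zero _) (map_one _)
  have hT₂inv : T₂⁻¹ = Matrix.fromBlocks X⁻¹ 0 (-(Z⁻¹ * Y * X⁻¹)) Z⁻¹ := by
    rw [hT₂b, Matrix.inv_fromBlocks_zero₁₂_of_isUnit_iff _ _ _ (iff_of_true hXZ.1 hXZ.2)]
  refine ⟨L, R, X⁻¹, -(Z⁻¹ * Y * X⁻¹), Zk⁻¹, hLu, hRu,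
    Matrix.isUnit_nonsing_inv_iff.mpr hXZ.1, Matrix.isUnit_nonsing_inv_iff.mpr hZku, ?_⟩
  have detPb : IsUnit Pb.det := (Matrix.isUnit_iff_isUnit_det _).mp hPbu
  have detDl : IsUnit Dl.det := (Matrix.isUnit_iff_isUnit_det _).mp hDlu
  have detDr : IsUnit Dr.det := (Matrix.isUnit_iff_isUnit_det _).mp hDru
  have hTinv₁ : T₁⁻¹ = Dl⁻¹ * Pb * Dr⁻¹ := by
    show (Dr * Pb⁻¹ * Dl)⁻¹ = _
    rw [Matrix.mul_inv_rev, Matrix.mul_inv_rev,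
      Matrix.nonsing_inv_nonsing_inv _ detPb, ← mul_assoc]
  have key : Pb = Dl * T₁⁻¹ * Dr := by
    rw [hTinv₁]
    have h1 : Dl * (Dl⁻¹ * Pb * Dr⁻¹) * Dr = (Dl * Dl⁻¹) * Pb * (Dr⁻¹ * Dr) := by
      simp only [mul_assoc]
    rw [h1, Matrix.mul_nonsing_inv _ detDl, Matrix.nonsing_inv_mul _ detDr, one_mul, mul_one]
  have hT₂invsub : T₁⁻¹ = T₂⁻¹.submatrix ⇑c.symm ⇑c.symm := by
    have h2 : T₂⁻¹ = T₁⁻¹.submatrix ⇑c ⇑c := by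
      have he : T₂ = T₁.submatrix ⇑c ⇑c := rfl
      rw [he, Matrix.inv_submatrix_equiv]
    rw [h2, Matrix.submatrix_submatrix, Equiv.self_comp_symm, Matrix.submatrix_id_id]
  have hfun : (⇑c.symm ∘ ⇑eι.symm : Fin (l + n) → (Fin (l + s) ⊕ Fin (n - s)))
      = ⇑finSumFinEquiv.symm ∘ Fin.cast hN := by
    funext x
    simp [c, eκ, eι]
  have hmid : T₁⁻¹.submatrix ⇑eι.symm ⇑eι.symm
      = (blocks X⁻¹ 0 (-(Z⁻¹ * Y * X⁻¹)) ((Zk⁻¹).map (algebraMap K F))).submatrix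
          (Fin.cast hN) (Fin.cast hN) := by
    rw [blocks_eq_fromBlocks, Matrix.submatrix_submatrix, ← hZinv, ← hT₂inv, hT₂invsub,
      Matrix.submatrix_submatrix, hfun]
  have hDlF : Dl.submatrix ⇑eι.symm ⇑eι.symm
      = blocks (1 : Matrix (Fin l) (Fin l) F) 0 0 (L.map (algebraMap K F)) := by
    rw [blocks_eq_fromBlocks]
  have hDrF : Dr.submatrix ⇑eι.symm ⇑eι.symm
      = blocks (1 : Matrix (Fin l) (Fin l) F) 0 0 (R.map (algebraMap K F)) := by
    rw [blocks_eq_fromBlocks]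
  have hsplit : (Dl * T₁⁻¹ * Dr).submatrix ⇑eι.symm ⇑eι.symm
      = Dl.submatrix ⇑eι.symm ⇑eι.symm * T₁⁻¹.submatrix ⇑eι.symm ⇑eι.symm *
        Dr.submatrix ⇑eι.symm ⇑eι.symm := by
    rw [Matrix.submatrix_mul_equiv Dl T₁⁻¹ _ eι.symm _,
      Matrix.submatrix_mul_equiv _ Dr _ eι.symm _]
  have hPP : P = Pb.submatrix ⇑eι.symm ⇑eι.symm := by
    show P = (P.submatrix ⇑eι ⇑eι).submatrix ⇑eι.symm ⇑eι.symm
    rw [Matrix.submatrix_submatrix, Equiv.self_comp_symm, Matrix.submatrix_id_id]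
  rw [hPP, key, hsplit, hDlF, hDrF, hmid]
end

section
/- Let e = (e₁ | e₂) ∈ F_{q^m}^{ℓ+n} with e₁ ∈ F_{q^m}^ℓ and e₂ ∈ F_{q^m}^n, and suppose ‖e‖ ≤ t_pub. Let T ∈ GL_{n+ℓ}(F_q) and let P ∈ GL_{n+ℓ}(F_{q^m}) be such that P^{−1} = [[Q₁₁, Q₁₂],[Q₂₁, Q₂₂]] where Q₁₁ is ℓ×ℓ, Q₁₂ is ℓ×n with ‖Q₁₂‖ ≤ s, Q₂₁ is n×ℓ, and Q₂₂ is n×n with all entries in the subfield F_q. Then ‖e·P^{−1}·T^{−1}‖ = ‖e·P^{−1}‖ ≤ ℓ + s + t_pub. -/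
open Matrix

lemma span_vecMul_map_le (K : Type*) {F : Type*} [Field K] [Field F] [Algebra K F]
    {N : ℕ} (x : Fin N → F) (M : Matrix (Fin N) (Fin N) K) :
    Submodule.span K (Set.range (Matrix.vecMul x (M.map (algebraMap K F)))) ≤
      Submodule.span K (Set.range x) := by
  rw [Submodule.span_le]
  rintro _ ⟨j, rfl⟩
  simp only [Matrix.vecMul, dotProduct, Matrix.map_apply]
  refine Submodule.sum_mem _ fun i _ => ?_
  rw [mul_comm, ← Algebra.smul_def]
  exact Submodule.smul_mem _ _ (Submodule.subset_span ⟨i, rfl⟩)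

lemma rankWeight_vecMul_inv (K : Type*) {F : Type*} [Field K] [Field F] [Algebra K F]
    {N : ℕ} (x : Fin N → F) (M : Matrix (Fin N) (Fin N) K) (hM : IsUnit M) :
    rankWeight K (Matrix.vecMul x (M.map (algebraMap K F))⁻¹) = rankWeight K x := by
  set f := algebraMap K F
  set Ti : Matrix (Fin N) (Fin N) K := ↑hM.unit⁻¹ with hTi
  have h1 : M * Ti = 1 := by
    have := hM.unit.mul_inv
    rwa [hM.unit_spec] at this
  have h2 : Ti * M = 1 := by
    have := hM.unit.inv_mul
    rwa [hM.unit_spec] at this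
  have hinv : (M.map f)⁻¹ = Ti.map f := by
    apply Matrix.inv_eq_right_inv
    rw [← Matrix.map_mul, h1]
    simp
  have hx : Matrix.vecMul (Matrix.vecMul x (Ti.map f)) (M.map f) = x := by
    rw [Matrix.vecMul_vecMul, ← Matrix.map_mul, h2]
    simp
  have hspan : Submodule.span K (Set.range (Matrix.vecMul x (Ti.map f))) =
      Submodule.span K (Set.range x) := by
    apply le_antisymm (span_vecMul_map_le K x Ti)
    conv_lhs => rw [← hx]
    exact span_vecMul_map_le K _ M
  unfold rankWeight
  rw [hinv, hspan]

/-- `K`-linear map `v ↦ ∑ i, e i * v i`. -/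
noncomputable def dotL (K : Type*) {F : Type*} [Field K] [Field F] [Algebra K F] {l : ℕ}
    (e : Fin l → F) : (Fin l → F) →ₗ[K] F where
  toFun v := ∑ i, e i * v i
  map_add' a b := by simp [mul_add, Finset.sum_add_distrib]
  map_smul' c v := by simp [Pi.smul_apply, mul_smul_comm, Finset.smul_sum]

/-- let `e = (e₁ | e₂)` with `‖e‖ ≤ t_pub`, let `T ∈ GL_{n+ℓ}(F_q)` and
let `P ∈ GL_{n+ℓ}(F_{q^m})` have inverse `[[Q₁₁, Q₁₂],[Q₂₁, Q₂₂]]` with `‖Q₁₂‖ ≤ s` and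
`Q₂₂` over `F_q`. Then `‖e·P⁻¹·T⁻¹‖ = ‖e·P⁻¹‖ ≤ ℓ + s + t_pub`. -/
theorem statement15 (K F : Type*) [Field K] [Field F] [Algebra K F] [Fintype K] [Fintype F]
    (l n s tpub : ℕ) (e1 : Fin l → F) (e2 : Fin n → F)
    (he : rankWeight K (Fin.append e1 e2) ≤ tpub)
    (T : Matrix (Fin (l + n)) (Fin (l + n)) K) (hT : IsUnit T)
    (P : Matrix (Fin (l + n)) (Fin (l + n)) F) (hP : IsUnit P)
    (Q11 : Matrix (Fin l) (Fin l) F) (Q12 : Matrix (Fin l) (Fin n) F)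
    (Q21 : Matrix (Fin n) (Fin l) F) (Q22 : Matrix (Fin n) (Fin n) K)
    (hQ12 : colRank K Q12 ≤ s)
    (hPinv : P⁻¹ = blocks Q11 Q12 Q21 (Q22.map (algebraMap K F))) :
    rankWeight K (Matrix.vecMul (Matrix.vecMul (Fin.append e1 e2) P⁻¹)
        (T.map (algebraMap K F))⁻¹) =
      rankWeight K (Matrix.vecMul (Fin.append e1 e2) P⁻¹) ∧
    rankWeight K (Matrix.vecMul (Fin.append e1 e2) P⁻¹) ≤ l + s + tpub := by
  set f := algebraMap K F
  set e : Fin (l + n) → F := Fin.append e1 e2 with he_def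
  set y : Fin (l + n) → F := Matrix.vecMul e P⁻¹ with hy
  refine ⟨rankWeight_vecMul_inv K y T hT, ?_⟩
  have hcoord : ∀ j : Fin n, y (Fin.natAdd l j) =
      (dotL K e1) (Q12ᵀ j) + ∑ i : Fin n, Q22 i j • e2 i := by
    intro j
    rw [hy, hPinv]
    simp only [Matrix.vecMul, dotProduct, blocks, Matrix.of_apply, he_def]
    rw [Fin.sum_univ_add]
    congr 1
    · simp [dotL, Fin.append_left, Fin.append_right]
    · simp only [Fin.append_right]
      refine Finset.sum_congr rfl fun i _ => ?_
      rw [Matrix.map_apply, Algebra.smul_def, mul_comm]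
  set U1 : Submodule K F := Submodule.span K (Set.range fun j : Fin l => y (Fin.castAdd n j))
  set U2 : Submodule K F := (Submodule.span K (Set.range Q12ᵀ)).map (dotL K e1)
  set U3 : Submodule K F := Submodule.span K (Set.range e)
  have hle : Submodule.span K (Set.range y) ≤ U1 ⊔ (U2 ⊔ U3) := by
    rw [Submodule.span_le]
    rintro _ ⟨j, rfl⟩
    refine Fin.addCases (fun j => ?_) (fun j => ?_) j
    · exact Submodule.mem_sup_left (Submodule.subset_span ⟨j, rfl⟩)
    · rw [hcoord j]
      refine Submodule.add_mem _ ?_ ?_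
      · exact Submodule.mem_sup_right (Submodule.mem_sup_left
          (Submodule.mem_map_of_mem (Submodule.subset_span ⟨j, rfl⟩)))
      · refine Submodule.mem_sup_right (Submodule.mem_sup_right
          (Submodule.sum_mem _ fun i _ => Submodule.smul_mem _ _ ?_))
        exact Submodule.subset_span ⟨Fin.natAdd l i, by simp [he_def, Fin.append_right]⟩
  have h1 : Module.finrank K U1 ≤ l := by
    exact (finrank_range_le_card (R := K) fun j : Fin l => y (Fin.castAdd n j)).trans (by simp)
  have h2 : Module.finrank K U2 ≤ s :=
    le_trans (Submodule.finrank_map_le _ _) hQ12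
  have h3 : Module.finrank K U3 ≤ tpub := he
  calc rankWeight K y = Module.finrank K (Submodule.span K (Set.range y)) := rfl
    _ ≤ Module.finrank K ↥(U1 ⊔ (U2 ⊔ U3)) := Submodule.finrank_mono hle
    _ ≤ Module.finrank K U1 + Module.finrank K ↥(U2 ⊔ U3) :=
        Submodule.finrank_add_le_finrank_add_finrank _ _
    _ ≤ Module.finrank K U1 + (Module.finrank K U2 + Module.finrank K U3) := by
        exact Nat.add_le_add_left (Submodule.finrank_add_le_finrank_add_finrank _ _) _
    _ ≤ l + (s + tpub) := by omega
    _ = l + s + tpub := by omega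
end

section
/- Let n ≤ m, 1 ≤ k < n, ℓ ≥ 0. Let G be the canonical generator matrix of a Gabidulin code Gab_k(g) with ‖g‖ = n, let S ∈ GL_k(F_{q^m}), let X be a k×ℓ matrix over F_{q^m}, let P ∈ GL_{n+ℓ}(F_q), and set G_pub = S·(X | G)·P, generating the code C_pub ⊆ F_{q^m}^{n+ℓ}. Assume there is a nonzero vector h ∈ F_{q^m}^n in the dual code of Gab_{n−1}(g) such that the dual code of Λ_{n−k−1}(C_pub) equals the F_{q^m}-line spanned by h* = (0 | h)·(P^{−1})^T. Let v be any nonzero vector of the dual of Λ_{n−k−1}(C_pub) and let T ∈ GL_{n+ℓ}(F_q) satisfy v·T^T = (0 | h′) for some h′ ∈ F_{q^m}^n. Then there exist a k×ℓ matrix Z over F_{q^m} and g* ∈ F_{q^m}^n with ‖g*‖ = n such that G_pub = S·(Z | G*)·T, where G* is the canonical generator matrix of the Gabidulin code Gab_k(g*). -/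
open Matrix

section AuxiliaryLemmas

open Polynomial

lemma exists_frobq (K : Type*) {F : Type*} [Field K] [Field F] [Algebra K F]
    [Fintype K] [Fintype F] (e : ℕ) :
    ∃ φ : F →+* F, ∀ x : F, φ x = x ^ (Fintype.card K) ^ e := by
  set p := ringChar K with hpdef
  haveI : CharP K p := ringChar.charP K
  have hp : p.Prime := CharP.char_is_prime K p
  haveI : Fact p.Prime := ⟨hp⟩
  haveI : CharP F p := charP_of_injective_algebraMap (algebraMap K F).injective p
  obtain ⟨s, hps, hcard⟩ := FiniteField.card K p
  refine ⟨iterateFrobenius F p (s * e), fun x => ?_⟩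
  rw [iterateFrobenius_def, hcard, ← pow_mul]

variable {K F : Type*} [Field K] [Field F] [Algebra K F]

lemma algebraMap_pow_q [Fintype K] (c : K) (e : ℕ) :
    (algebraMap K F c) ^ (Fintype.card K) ^ e = algebraMap K F c := by
  rw [← map_pow, FiniteField.pow_card_pow]

lemma moore_linearIndependent [Fintype K] [Fintype F] {n : ℕ}
    (g : Fin n → F) (hg : LinearIndependent K g) :
    LinearIndependent F (fun i : Fin n => fun j => g j ^ (Fintype.card K) ^ (i : ℕ)) := by
  classical
  set q := Fintype.card K with hq
  have hq1 : 1 < q := Fintype.one_lt_card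
  rw [Fintype.linearIndependent_iff]
  intro a ha
  by_contra hcon
  push_neg at hcon
  obtain ⟨i₀, hi₀⟩ := hcon
  set p : Polynomial F := ∑ i : Fin n, Polynomial.C (a i) * Polynomial.X ^ (q ^ (i : ℕ))
    with hpdef
  have hcoeff : p.coeff (q ^ (i₀ : ℕ)) = a i₀ := by
    rw [hpdef, Polynomial.finset_sum_coeff]
    rw [Finset.sum_eq_single i₀]
    · simp
    · intro b _ hb
      rw [Polynomial.coeff_C_mul, Polynomial.coeff_X_pow, if_neg, mul_zero]
      intro hbe
      exact hb (Fin.ext (Nat.pow_right_injective hq1 hbe.symm))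
    · simp
  have hpne : p ≠ 0 := fun h0 => hi₀ (by rw [← hcoeff, h0, Polynomial.coeff_zero])
  have hdeg : p.natDegree ≤ q ^ (n - 1) := by
    refine (Polynomial.natDegree_sum_le _ _).trans ?_
    rw [Finset.fold_max_le]
    refine ⟨Nat.zero_le _, fun i _ => ?_⟩
    calc (Polynomial.natDegree ∘ fun i : Fin n => Polynomial.C (a i) * Polynomial.X ^ q ^ (i : ℕ)) i
        = (Polynomial.C (a i) * Polynomial.X ^ q ^ (i : ℕ)).natDegree := rfl
      _ ≤ q ^ (i : ℕ) := Polynomial.natDegree_C_mul_X_pow_le _ _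
      _ ≤ q ^ (n - 1) := Nat.pow_le_pow_right (by omega) (by have := i.isLt; omega)
  -- every element of the K-span of the g j is a root
  have heval : ∀ x ∈ Submodule.span K (Set.range g), p.eval x = 0 := by
    have hev : ∀ x : F, p.eval x = ∑ i : Fin n, a i * x ^ (q ^ (i : ℕ)) := by
      intro x
      rw [hpdef, Polynomial.eval_finset_sum]
      simp
    intro x hx
    induction hx using Submodule.span_induction with
    | mem x hxm =>
      obtain ⟨j, rfl⟩ := hxm
      rw [hev]
      have := congrFun ha j
      simpa using this
    | zero =>
      rw [hev]
      refine Finset.sum_eq_zero fun i _ => ?_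
      rw [zero_pow (by positivity), mul_zero]
    | add x y _ _ hx hy =>
      rw [hev] at hx hy ⊢
      rw [← hx]
      have : ∀ i : Fin n, (x + y) ^ q ^ (i : ℕ) = x ^ q ^ (i : ℕ) + y ^ q ^ (i : ℕ) := by
        intro i
        obtain ⟨φ, hφ⟩ := exists_frobq (K := K) (F := F) (i : ℕ)
        rw [← hφ, ← hφ, ← hφ, map_add]
      calc ∑ i : Fin n, a i * (x + y) ^ q ^ (i : ℕ)
          = (∑ i : Fin n, a i * x ^ q ^ (i : ℕ)) + ∑ i : Fin n, a i * y ^ q ^ (i : ℕ) := by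
            rw [← Finset.sum_add_distrib]
            exact Finset.sum_congr rfl fun i _ => by rw [this i, mul_add]
        _ = ∑ i : Fin n, a i * x ^ q ^ (i : ℕ) := by rw [hy, add_zero]
    | smul c x _ hx =>
      rw [hev] at hx ⊢
      have : ∀ i : Fin n, (c • x) ^ q ^ (i : ℕ)
          = algebraMap K F c * x ^ q ^ (i : ℕ) := by
        intro i
        rw [Algebra.smul_def, mul_pow, algebraMap_pow_q]
      calc ∑ i : Fin n, a i * (c • x) ^ q ^ (i : ℕ)
          = algebraMap K F c * ∑ i : Fin n, a i * x ^ q ^ (i : ℕ) := by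
            rw [Finset.mul_sum]
            exact Finset.sum_congr rfl fun i _ => by rw [this i]; ring
        _ = 0 := by rw [hx, mul_zero]
  -- counting
  set V := Submodule.span K (Set.range g) with hV
  have hfinrank : Module.finrank K V = n := by simpa using finrank_span_eq_card hg
  have hcardV : Fintype.card V = q ^ n := by
    rw [Module.card_eq_pow_finrank (K := K) (V := V), hfinrank]
  have hsub : (Finset.univ : Finset V).image (fun x : V => (x : F)) ⊆ p.roots.toFinset := by
    intro x hx
    simp only [Finset.mem_image] at hx
    obtain ⟨y, _, rfl⟩ := hx
    rw [Multiset.mem_toFinset, Polynomial.mem_roots hpne]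
    exact heval _ y.2
  have hinj : ((Finset.univ : Finset V).image (fun x : V => (x : F))).card = q ^ n := by
    rw [Finset.card_image_of_injective _ Subtype.val_injective, Finset.card_univ, hcardV]
  have h1 : q ^ n ≤ p.roots.toFinset.card := hinj ▸ Finset.card_le_card hsub
  have h2 : p.roots.toFinset.card ≤ p.natDegree :=
    le_trans (Multiset.toFinset_card_le _) (Polynomial.card_roots' p)
  have h3 : q ^ (n - 1) < q ^ n :=
    Nat.pow_lt_pow_right hq1 (by have := i₀.isLt; omega)
  omega

lemma sum_dotProduct' {α : Type*} [NonUnitalNonAssocSemiring α] {n : Type*} [Fintype n]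
    {ι : Type*} (s : Finset ι) (f : ι → n → α) (h : n → α) :
    dotProduct (∑ i ∈ s, f i) h = ∑ i ∈ s, dotProduct (f i) h := by
  simp only [dotProduct, Finset.sum_apply, Finset.sum_mul]
  rw [Finset.sum_comm]

lemma dualvec_linearIndependent [Fintype K] [Fintype F] {N : ℕ}
    (g : Fin (N + 1) → F) (hg : LinearIndependent K g)
    (h : Fin (N + 1) → F) (h0 : h ≠ 0)
    (hd : ∀ i : Fin N,
      dotProduct (fun j => g j ^ (Fintype.card K) ^ (i : ℕ)) h = 0) :
    LinearIndependent K h := by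
  classical
  set q := Fintype.card K with hq
  set r : Fin (N + 1) → (Fin (N + 1) → F) :=
    fun i => fun j => g j ^ q ^ (i : ℕ) with hr
  have hMoore : LinearIndependent F r := moore_linearIndependent g hg
  have hcardeq : Fintype.card (Fin (N + 1)) = Module.finrank F (Fin (N + 1) → F) := by
    simp
  let b := basisOfLinearIndependentOfCardEqFinrank hMoore hcardeq
  have hb : ⇑b = r := coe_basisOfLinearIndependentOfCardEqFinrank _ _
  -- dot products with rows
  have hdot_cs : ∀ i : Fin N, dotProduct (r i.castSucc) h = 0 := by
    intro i
    have := hd i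
    simpa [hr, Fin.coe_castSucc] using this
  have hdlast : dotProduct (r (Fin.last N)) h ≠ 0 := by
    intro hz
    have hall : ∀ i : Fin (N + 1), dotProduct (r i) h = 0 := by
      intro i
      refine Fin.lastCases ?_ ?_ i
      · exact hz
      · exact hdot_cs
    apply h0
    funext j
    have hx : ∀ x : Fin (N + 1) → F, dotProduct x h = 0 := by
      intro x
      have hxr : x = ∑ i, b.repr x i • r i := by
        conv_lhs => rw [← b.sum_repr x]
        rw [hb]
      rw [hxr, sum_dotProduct']
      refine Finset.sum_eq_zero fun i _ => ?_
      rw [smul_dotProduct, hall i, smul_zero]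
    have := hx (Pi.single j 1)
    rwa [single_dotProduct, one_mul] at this
  rw [Fintype.linearIndependent_iff]
  intro c hc
  set cF : Fin (N + 1) → F := fun j => algebraMap K F (c j) with hcF
  suffices hsuff : ∀ j, cF j = 0 by
    intro i
    have h1 := hsuff i
    exact (algebraMap K F).injective (by rw [map_zero]; exact h1)
  set a : Fin (N + 1) → F := fun i => b.repr cF i with ha
  have hrepr : ∑ i, a i • r i = cF := by
    conv_rhs => rw [← b.sum_repr cF]
    rw [hb]
  -- dot product of cF with h is zero
  have hcdot : dotProduct cF h = 0 := by
    have : dotProduct cF h = ∑ j, c j • h j := by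
      simp [dotProduct, hcF, Algebra.smul_def]
    rw [this, hc]
  have halast : a (Fin.last N) = 0 := by
    have hsplit : dotProduct cF h
        = a (Fin.last N) * dotProduct (r (Fin.last N)) h := by
      rw [← hrepr, sum_dotProduct']
      rw [Fin.sum_univ_castSucc]
      have : ∀ i : Fin N,
          dotProduct (a i.castSucc • r i.castSucc) h = 0 := by
        intro i
        rw [smul_dotProduct, hdot_cs i, smul_zero]
      rw [Finset.sum_congr rfl fun i _ => this i]
      simp [smul_dotProduct, smul_eq_mul]
    rw [hcdot] at hsplit
    exact (mul_eq_zero.mp hsplit.symm).resolve_right hdlast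
  -- Frobenius comparison
  obtain ⟨φ, hφ⟩ := exists_frobq K (F := F) 1
  have hφq : ∀ x : F, φ x = x ^ q := by intro x; rw [hφ, pow_one]
  set c' : Fin (N + 1) → F := Fin.cases 0 (fun j => φ (a j.castSucc)) with hc'
  have key : ∑ i, c' i • r i = cF := by
    have hstep : ∀ j : Fin (N + 1), φ (cF j) = cF j := by
      intro j
      rw [hφ]
      exact algebraMap_pow_q (c j) 1
    have hexp : ∀ (i : Fin N) (j : Fin (N + 1)),
        φ (r i.castSucc j) = r i.succ j := by
      intro i j
      rw [hφq, hr]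
      simp only
      rw [← pow_mul, ← pow_succ]
      congr 1
    calc ∑ i, c' i • r i
        = ∑ j : Fin N, φ (a j.castSucc) • r j.succ := by
          rw [Fin.sum_univ_succ]
          simp [hc']
      _ = ∑ j : Fin N, φ (a j.castSucc) • fun x => φ (r j.castSucc x) := by
          refine Finset.sum_congr rfl fun j _ => ?_
          congr 1
          funext x
          rw [hexp]
      _ = cF := by
          funext x
          have : cF x = φ (cF x) := (hstep x).symm
          rw [this]
          conv_rhs => rw [← hrepr]
          simp only [Finset.sum_apply, Pi.smul_apply, smul_eq_mul]
          rw [map_sum]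
          rw [Fin.sum_univ_castSucc]
          have hlast0 : φ (a (Fin.last N) * r (Fin.last N) x) = 0 := by
            rw [halast, zero_mul, map_zero]
          rw [hlast0, add_zero]
          refine Finset.sum_congr rfl fun j _ => ?_
          rw [_root_.map_mul]
  have hac : ∀ i, a i = c' i := by
    have h0' : ∑ i, (a i - c' i) • r i = 0 := by
      have : ∑ i, (a i - c' i) • r i = (∑ i, a i • r i) - ∑ i, c' i • r i := by
        rw [← Finset.sum_sub_distrib]
        exact Finset.sum_congr rfl fun i _ => sub_smul _ _ _
      rw [this, hrepr, key, sub_self]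
    intro i
    have := Fintype.linearIndependent_iff.mp hMoore _ h0' i
    exact sub_eq_zero.mp this
  have hazero : ∀ i, a i = 0 := by
    intro i
    induction i using Fin.induction with
    | zero => rw [hac 0]; simp [hc']
    | succ i ih =>
      rw [hac i.succ]
      simp only [hc', Fin.cases_succ]
      rw [ih, map_zero]
  intro j
  rw [← hrepr]
  simp only [Finset.sum_apply, Pi.smul_apply, smul_eq_mul]
  refine Finset.sum_eq_zero fun i _ => by rw [hazero i, zero_mul]

end AuxiliaryLemmas

/-- Overbeck's attack, final step: with `G_pub = S·(X | G)·P`,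
`P ∈ GL_{n+ℓ}(F_q)`, if `h` is a nonzero vector of the dual of `Gab_{n-1}(g)` such that
the dual of `Λ_{n-k-1}(C_pub)` is the line spanned by `h* = (0 | h)·(P⁻¹)ᵀ`, then any
`T ∈ GL_{n+ℓ}(F_q)` such that `v·Tᵀ = (0 | h')` for some nonzero dual vector `v` is an
alternative column scrambler: `G_pub = S·(Z | G*)·T` for some `Z` and some Gabidulin
code `Gab_k(g*)` with `‖g*‖ = n` and canonical generator matrix `G*`. -/
theorem statement17 (K F : Type*) [Field K] [Field F] [Algebra K F] [Fintype K] [Fintype F]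
    (m n k l : ℕ) (hm : Fintype.card F = Fintype.card K ^ m) (hnm : n ≤ m)
    (hk1 : 1 ≤ k) (hkn : k < n)
    (g : Fin n → F) (hg : rankWeight K g = n)
    (S : Matrix (Fin k) (Fin k) F) (hS : IsUnit S)
    (X : Matrix (Fin k) (Fin l) F)
    (P : Matrix (Fin (l + n)) (Fin (l + n)) K) (hP : IsUnit P)
    (Gpub : Matrix (Fin k) (Fin (l + n)) F)
    (hGpub : Gpub =
      S * happend X (gabGen (Fintype.card K) k g) * P.map (algebraMap K F))
    (hvec : Fin n → F) (hvec0 : hvec ≠ 0)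
    (hdualvec : hvec ∈ dualCode (gabCode (Fintype.card K) (n - 1) g))
    (hdual : dualCode (Submodule.span F
        (Set.range (lam (Fintype.card K) (n - k - 1) Gpub))) =
      Submodule.span F
        {Matrix.vecMul (Fin.append (0 : Fin l → F) hvec)
          (((P⁻¹).map (algebraMap K F))ᵀ)})
    (v : Fin (l + n) → F) (hv0 : v ≠ 0)
    (hv : v ∈ dualCode (Submodule.span F
        (Set.range (lam (Fintype.card K) (n - k - 1) Gpub))))
    (T : Matrix (Fin (l + n)) (Fin (l + n)) K) (hT : IsUnit T)
    (hvec' : Fin n → F)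
    (hvT : Matrix.vecMul v ((T.map (algebraMap K F))ᵀ) =
      Fin.append (0 : Fin l → F) hvec') :
    ∃ (Z : Matrix (Fin k) (Fin l) F) (gstar : Fin n → F),
      rankWeight K gstar = n ∧
      Gpub = S * happend Z (gabGen (Fintype.card K) k gstar) *
        T.map (algebraMap K F) := by
  classical
  obtain ⟨N, rfl⟩ : ∃ N, n = N + 1 := ⟨n - 1, by omega⟩
  set AK := algebraMap K F with hAK
  -- linear independence of g over K
  have hGli : LinearIndependent K g := by
    rw [linearIndependent_iff_card_eq_finrank_span]
    rw [Fintype.card_fin]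
    exact (hg).symm
  -- dot products of hvec with Moore rows
  have hdot : ∀ i : Fin N,
      dotProduct (fun j => g j ^ (Fintype.card K) ^ (i : ℕ)) hvec = 0 := by
    intro i
    exact hdualvec (gabGen (Fintype.card K) ((N + 1) - 1) g i)
      (Submodule.subset_span (Set.mem_range_self i))
  have hLIh : LinearIndependent K hvec :=
    dualvec_linearIndependent g hGli hvec hvec0 hdot
  -- matrix units
  have hPd : IsUnit P.det := (Matrix.isUnit_iff_isUnit_det P).mp hP
  have hTd : IsUnit T.det := (Matrix.isUnit_iff_isUnit_det T).mp hT
  set KQ : Matrix (Fin (l + (N + 1))) (Fin (l + (N + 1))) K := P * T⁻¹ with hKQ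
  set KR : Matrix (Fin (l + (N + 1))) (Fin (l + (N + 1))) K := T * P⁻¹ with hKR
  have hQR : KQ * KR = 1 := by
    have h1 : T⁻¹ * (T * P⁻¹) = P⁻¹ := by
      rw [← Matrix.mul_assoc, Matrix.nonsing_inv_mul T hTd, Matrix.one_mul]
    rw [hKQ, hKR, Matrix.mul_assoc, h1, Matrix.mul_nonsing_inv P hPd]
  have hKQT : KQ * T = P := by
    rw [hKQ, Matrix.mul_assoc, Matrix.nonsing_inv_mul T hTd, Matrix.mul_one]
  -- v is a multiple of h*
  rw [hdual] at hv
  obtain ⟨lam, hvl⟩ := Submodule.mem_span_singleton.mp hv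
  have hlam0 : lam ≠ 0 := by
    rintro rfl
    rw [zero_smul] at hvl
    exact hv0 hvl.symm
  -- rewrite hvT
  have e1 : lam • Matrix.vecMul (Fin.append (0 : Fin l → F) hvec) ((KR.map AK)ᵀ)
      = Fin.append (0 : Fin l → F) hvec' := by
    rw [← hvT, ← hvl, Matrix.smul_vecMul, Matrix.vecMul_vecMul, ← Matrix.transpose_mul,
      ← Matrix.map_mul, hKR]
  have hkey : ∀ jl : Fin l,
      ∑ t : Fin (N + 1), hvec t * AK (KR (Fin.castAdd (N + 1) jl) (Fin.natAdd l t)) = 0 := by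
    intro jl
    have h2 := congrFun e1 (Fin.castAdd (N + 1) jl)
    rw [Fin.append_left] at h2
    simp only [Pi.smul_apply, smul_eq_mul, Pi.zero_apply] at h2
    have h3 : Matrix.vecMul (Fin.append (0 : Fin l → F) hvec) ((KR.map AK)ᵀ)
        (Fin.castAdd (N + 1) jl)
        = ∑ t : Fin (N + 1), hvec t * AK (KR (Fin.castAdd (N + 1) jl) (Fin.natAdd l t)) := by
      simp only [Matrix.vecMul, dotProduct, Matrix.transpose_apply, Matrix.map_apply]
      rw [Fin.sum_univ_add]
      have hz : ∀ s : Fin l, Fin.append (0 : Fin l → F) hvec (Fin.castAdd (N + 1) s) *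
          AK (KR (Fin.castAdd (N + 1) jl) (Fin.castAdd (N + 1) s)) = 0 := by
        intro s
        rw [Fin.append_left]
        simp
      rw [Finset.sum_congr rfl fun s _ => hz s, Finset.sum_const_zero, zero_add]
      refine Finset.sum_congr rfl fun t _ => ?_
      rw [Fin.append_right]
    rw [h3] at h2
    rcases mul_eq_zero.mp h2 with h | h
    · exact absurd h hlam0
    · exact h
  have hR12 : ∀ (jl : Fin l) (t : Fin (N + 1)),
      KR (Fin.castAdd (N + 1) jl) (Fin.natAdd l t) = 0 := by
    intro jl
    exact Fintype.linearIndependent_iff.mp hLIh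
      (fun t => KR (Fin.castAdd (N + 1) jl) (Fin.natAdd l t))
      (by
        have h4 := hkey jl
        calc ∑ t : Fin (N + 1), KR (Fin.castAdd (N + 1) jl) (Fin.natAdd l t) • hvec t
            = ∑ t : Fin (N + 1), hvec t * AK (KR (Fin.castAdd (N + 1) jl) (Fin.natAdd l t)) := by
              refine Finset.sum_congr rfl fun t _ => ?_
              rw [Algebra.smul_def, mul_comm, hAK]
          _ = 0 := h4)
  -- blocks of KQ and KR
  set D : Matrix (Fin (N + 1)) (Fin (N + 1)) K :=
    Matrix.of (fun i j => KR (Fin.natAdd l i) (Fin.natAdd l j)) with hD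
  set Q22 : Matrix (Fin (N + 1)) (Fin (N + 1)) K :=
    Matrix.of (fun i j => KQ (Fin.natAdd l i) (Fin.natAdd l j)) with hQ22def
  set Q12 : Matrix (Fin l) (Fin (N + 1)) K :=
    Matrix.of (fun i j => KQ (Fin.castAdd (N + 1) i) (Fin.natAdd l j)) with hQ12def
  have hQ22D : Q22 * D = 1 := by
    ext a b
    have hmm : ∑ t : Fin (N + 1), Q22 a t * D t b
        = (KQ * KR) (Fin.natAdd l a) (Fin.natAdd l b) := by
      conv_rhs => rw [Matrix.mul_apply, Fin.sum_univ_add]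
      have hz : ∀ s : Fin l, KQ (Fin.natAdd l a) (Fin.castAdd (N + 1) s) *
          KR (Fin.castAdd (N + 1) s) (Fin.natAdd l b) = 0 := fun s => by
        rw [hR12, mul_zero]
      rw [Finset.sum_congr rfl fun s _ => hz s, Finset.sum_const_zero, zero_add]
      rfl
    rw [Matrix.mul_apply, hmm, hQR, Matrix.one_apply, Matrix.one_apply]
    by_cases hab : a = b
    · subst hab
      rw [if_pos rfl, if_pos rfl]
    · rw [if_neg hab, if_neg (fun hc => hab (by
        have := congrArg Fin.val hc
        simp only [Fin.coe_natAdd] at this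
        exact Fin.ext (Nat.add_left_cancel this)))]
  have hQ12D : Q12 * D = 0 := by
    ext a b
    have hmm : ∑ t : Fin (N + 1), Q12 a t * D t b
        = (KQ * KR) (Fin.castAdd (N + 1) a) (Fin.natAdd l b) := by
      conv_rhs => rw [Matrix.mul_apply, Fin.sum_univ_add]
      have hz : ∀ s : Fin l, KQ (Fin.castAdd (N + 1) a) (Fin.castAdd (N + 1) s) *
          KR (Fin.castAdd (N + 1) s) (Fin.natAdd l b) = 0 := fun s => by
        rw [hR12, mul_zero]
      rw [Finset.sum_congr rfl fun s _ => hz s, Finset.sum_const_zero, zero_add]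
      rfl
    rw [Matrix.mul_apply, hmm, hQR, Matrix.one_apply, Matrix.zero_apply, if_neg]
    intro hc
    have := congrArg Fin.val hc
    simp only [Fin.coe_castAdd, Fin.coe_natAdd] at this
    have := a.isLt
    omega
  have hDQ22 : D * Q22 = 1 := mul_eq_one_comm.mp hQ22D
  have hQ12z : Q12 = 0 := by
    calc Q12 = Q12 * (D * Q22) := by rw [hDQ22, Matrix.mul_one]
      _ = (Q12 * D) * Q22 := by rw [Matrix.mul_assoc]
      _ = 0 := by rw [hQ12D, Matrix.zero_mul]
  have hQ12e : ∀ (a : Fin l) (t : Fin (N + 1)),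
      KQ (Fin.castAdd (N + 1) a) (Fin.natAdd l t) = 0 := by
    intro a t
    have := congrFun (congrFun hQ12z a) t
    simpa [hQ12def] using this
  -- the new Gabidulin vector
  set gstar : Fin (N + 1) → F := fun j => ∑ t, g t * AK (Q22 t j) with hgstar
  have hginv : ∀ u, g u = ∑ j2, D j2 u • gstar j2 := by
    intro u
    have h1 : ∑ j2, D j2 u • gstar j2 = ∑ t, g t * AK ((Q22 * D) t u) := by
      simp only [hgstar, Algebra.smul_def, hAK]
      simp_rw [Finset.mul_sum]
      rw [Finset.sum_comm]
      refine Finset.sum_congr rfl fun t _ => ?_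
      rw [Matrix.mul_apply, map_sum, Finset.mul_sum]
      refine Finset.sum_congr rfl fun j2 _ => ?_
      rw [_root_.map_mul]
      ring
    rw [h1, hQ22D]
    have h2 : ∀ t : Fin (N + 1), g t * AK ((1 : Matrix (Fin (N + 1)) (Fin (N + 1)) K) t u)
        = if t = u then g t else 0 := by
      intro t
      rw [Matrix.one_apply]
      by_cases htu : t = u
      · rw [if_pos htu, if_pos htu, _root_.map_one, mul_one]
      · rw [if_neg htu, if_neg htu, map_zero, mul_zero]
    rw [Finset.sum_congr rfl fun t _ => h2 t, Finset.sum_ite_eq' Finset.univ u (fun t => g t),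
      if_pos (Finset.mem_univ u)]
  have hspan : Submodule.span K (Set.range gstar) = Submodule.span K (Set.range g) := by
    apply le_antisymm
    · rw [Submodule.span_le]
      rintro x ⟨j2, rfl⟩
      have : gstar j2 = ∑ t, Q22 t j2 • g t := by
        rw [hgstar]
        exact Finset.sum_congr rfl fun t _ => by rw [Algebra.smul_def, mul_comm, hAK]
      rw [this]
      exact Submodule.sum_mem _ fun t _ =>
        Submodule.smul_mem _ _ (Submodule.subset_span (Set.mem_range_self t))
    · rw [Submodule.span_le]
      rintro x ⟨u, rfl⟩
      rw [hginv u]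
      exact Submodule.sum_mem _ fun j2 _ =>
        Submodule.smul_mem _ _ (Submodule.subset_span (Set.mem_range_self j2))
  have hgrank : rankWeight K gstar = N + 1 := by
    rw [rankWeight, hspan]
    exact hg
  -- the matrix Z
  set Q11 : Matrix (Fin l) (Fin l) K :=
    Matrix.of (fun i j => KQ (Fin.castAdd (N + 1) i) (Fin.castAdd (N + 1) j)) with hQ11def
  set Q21 : Matrix (Fin (N + 1)) (Fin l) K :=
    Matrix.of (fun i j => KQ (Fin.natAdd l i) (Fin.castAdd (N + 1) j)) with hQ21def
  set Z : Matrix (Fin k) (Fin l) F :=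
    X * (Q11.map AK) + (gabGen (Fintype.card K) k g) * (Q21.map AK) with hZ
  have hMAIN : happend X (gabGen (Fintype.card K) k g) * (KQ.map AK)
      = happend Z (gabGen (Fintype.card K) k gstar) := by
    ext i c
    refine Fin.addCases (fun jl => ?_) (fun jn => ?_) c
    · -- first block column
      have hL : (happend X (gabGen (Fintype.card K) k g) * (KQ.map AK)) i (Fin.castAdd (N + 1) jl)
          = ∑ s : Fin l, X i s * AK (KQ (Fin.castAdd (N + 1) s) (Fin.castAdd (N + 1) jl))
            + ∑ t : Fin (N + 1), gabGen (Fintype.card K) k g i t *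
                AK (KQ (Fin.natAdd l t) (Fin.castAdd (N + 1) jl)) := by
        conv_lhs => rw [Matrix.mul_apply, Fin.sum_univ_add]
        congr 1
        · refine Finset.sum_congr rfl fun s _ => ?_
          rw [show happend X (gabGen (Fintype.card K) k g) i (Fin.castAdd (N + 1) s)
            = X i s from Fin.append_left _ _ s]
          rfl
        · refine Finset.sum_congr rfl fun t _ => ?_
          rw [show happend X (gabGen (Fintype.card K) k g) i (Fin.natAdd l t)
            = gabGen (Fintype.card K) k g i t from Fin.append_right _ _ t]
          rfl
      rw [hL]
      rw [show happend Z (gabGen (Fintype.card K) k gstar) i (Fin.castAdd (N + 1) jl)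
        = Z i jl from Fin.append_left _ _ jl]
      rw [hZ, Matrix.add_apply, Matrix.mul_apply, Matrix.mul_apply]
      rfl
    · -- second block column
      have hL : (happend X (gabGen (Fintype.card K) k g) * (KQ.map AK)) i (Fin.natAdd l jn)
          = ∑ s : Fin l, X i s * AK (KQ (Fin.castAdd (N + 1) s) (Fin.natAdd l jn))
            + ∑ t : Fin (N + 1), gabGen (Fintype.card K) k g i t *
                AK (KQ (Fin.natAdd l t) (Fin.natAdd l jn)) := by
        conv_lhs => rw [Matrix.mul_apply, Fin.sum_univ_add]
        congr 1
        · refine Finset.sum_congr rfl fun s _ => ?_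
          rw [show happend X (gabGen (Fintype.card K) k g) i (Fin.castAdd (N + 1) s)
            = X i s from Fin.append_left _ _ s]
          rfl
        · refine Finset.sum_congr rfl fun t _ => ?_
          rw [show happend X (gabGen (Fintype.card K) k g) i (Fin.natAdd l t)
            = gabGen (Fintype.card K) k g i t from Fin.append_right _ _ t]
          rfl
      rw [hL]
      have hz1 : ∑ s : Fin l, X i s * AK (KQ (Fin.castAdd (N + 1) s) (Fin.natAdd l jn)) = 0 := by
        refine Finset.sum_eq_zero fun s _ => ?_
        rw [hQ12e, map_zero, mul_zero]
      rw [hz1, zero_add]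
      rw [show happend Z (gabGen (Fintype.card K) k gstar) i (Fin.natAdd l jn)
        = gabGen (Fintype.card K) k gstar i jn from Fin.append_right _ _ jn]
      show ∑ t : Fin (N + 1), gabGen (Fintype.card K) k g i t *
          AK (KQ (Fin.natAdd l t) (Fin.natAdd l jn)) = gstar jn ^ (Fintype.card K) ^ (i : ℕ)
      obtain ⟨φ, hφ⟩ := exists_frobq K (F := F) (i : ℕ)
      rw [hgstar, ← hφ, map_sum]
      refine Finset.sum_congr rfl fun t _ => ?_
      rw [_root_.map_mul, hφ, hφ]
      rw [hAK, algebraMap_pow_q]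
      rfl
  -- conclusion
  refine ⟨Z, gstar, hgrank, ?_⟩
  rw [hGpub]
  have hPmap : P.map AK = (KQ.map AK) * (T.map AK) := by
    rw [← Matrix.map_mul, hKQT]
  rw [hPmap, ← Matrix.mul_assoc, Matrix.mul_assoc S (happend X (gabGen (Fintype.card K) k g))
    (KQ.map AK), hMAIN]
end
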